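/- Let N be a set of ground closures and let R_s, E_s, R_* be the candidate interpretation constructed from N. Let (C₁·θ) and (C₂·θ) be two ground closures and s a ground term such that s is a strictly maximal term of both C₁θ and C₂θ and occurs only in positive literals of both. Then (C₁·θ) ≫_{R_s} (C₂·θ) if and only if (C₁·θ) ≫_{R_*} (C₂·θ). -/

import Mathlib

/- Common infrastructure: first-order terms, clauses, ground rewrite systems,
   reduction orderings, the (Horn and non-Horn) R-normalization closure orderings,
   the Ground Closure (Horn) Superposition Calculus and its redundancy criterion,
   and the candidate interpretation construction, following Waldmann,
   "On the (In-)Completeness of Destructive Equality Resolution in the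
   Superposition Calculus". -/

set_option autoImplicit false
set_option maxHeartbeats 1000000

noncomputable section

/-- First-order terms over function symbols `F` and variables `V`. -/
inductive Trm (F V : Type) : Type
  | var : V → Trm F V
  | app : F → List (Trm F V) → Trm F V

namespace Trm
variable {F V : Type}

instance : DecidableEq (Trm F V) := Classical.decEq _

/-- Application of a substitution to a term. -/
def subst (θ : V → Trm F V) : Trm F V → Trm F V
  | var x => θ x
  | app f ts => app f (ts.attach.map fun t => subst θ t.1)
decreasing_by
  have := List.sizeOf_lt_of_mem t.2
  simp only [Trm.app.sizeOf_spec]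
  omega

/-- A term is ground if it contains no variables. -/
inductive IsGround : Trm F V → Prop
  | app {f : F} {ts : List (Trm F V)} : (∀ t ∈ ts, IsGround t) → IsGround (app f ts)

/-- The set of all subterms of a term (including the term itself). -/
def subterms : Trm F V → Finset (Trm F V)
  | var x => {var x}
  | app f ts => insert (app f ts) ((ts.attach.map fun t => subterms t.1).foldr (· ∪ ·) ∅)
decreasing_by
  have := List.sizeOf_lt_of_mem t.2
  simp only [Trm.app.sizeOf_spec]
  omega

/-- The set of proper subterms of a term (subterms at positions `> ε`). -/
def psubterms : Trm F V → Finset (Trm F V)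
  | var _ => ∅
  | app _ ts => (ts.map fun t => subterms t).foldr (· ∪ ·) ∅

end Trm

/-- Contexts: terms with exactly one hole. -/
inductive Ctx (F V : Type) : Type
  | hole : Ctx F V
  | app : F → List (Trm F V) → Ctx F V → List (Trm F V) → Ctx F V

/-- Filling the hole of a context with a term. -/
def Ctx.fill {F V : Type} : Ctx F V → Trm F V → Trm F V
  | .hole, t => t
  | .app f l c r, t => Trm.app f (l ++ c.fill t :: r)

variable {F V : Type}

/-- `RewAt R s t u root` holds iff `s` rewrites to `t` in one step using a rule of `R`
whose left-hand side is `u`, and `root = true` iff the rewrite position is `ε`. -/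
inductive RewAt (R : Set (Trm F V × Trm F V)) : Trm F V → Trm F V → Trm F V → Bool → Prop
  | root {u v : Trm F V} : (u, v) ∈ R → RewAt R u v u true
  | congr {t t' u : Trm F V} {b : Bool} {f : F} {l r : List (Trm F V)} :
      RewAt R t t' u b → RewAt R (.app f (l ++ t :: r)) (.app f (l ++ t' :: r)) u false

/-- One-step rewrite relation `s →_R t`. -/
def Step (R : Set (Trm F V × Trm F V)) (s t : Trm F V) : Prop := ∃ u b, RewAt R s t u b

/-- `t` is irreducible w.r.t. `R`. -/
def Irred (R : Set (Trm F V × Trm F V)) (t : Trm F V) : Prop := ∀ t', ¬ Step R t t'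

/-- `R` is left-reduced: the left-hand side of each rule is irreducible by the other rules. -/
def LeftReduced (R : Set (Trm F V × Trm F V)) : Prop := ∀ p ∈ R, Irred (R \ {p}) p.1

/-- A reduction ordering that is total on ground terms. -/
structure ReductionOrdering (F V : Type) where
  gt : Trm F V → Trm F V → Prop
  trans : ∀ {a b c : Trm F V}, gt a b → gt b c → gt a c
  wf : WellFounded fun a b : Trm F V => gt b a
  compat_ctx : ∀ {s t : Trm F V} (f : F) (l r : List (Trm F V)),
      gt s t → gt (.app f (l ++ s :: r)) (.app f (l ++ t :: r))
  compat_subst : ∀ {s t : Trm F V} (θ : V → Trm F V), gt s t → gt (s.subst θ) (t.subst θ)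
  total_ground : ∀ {s t : Trm F V}, s.IsGround → t.IsGround → s ≠ t → gt s t ∨ gt t s

/-- A left-reduced ground rewrite system contained in the reduction ordering `O`. -/
def GoodRS (O : ReductionOrdering F V) (R : Set (Trm F V × Trm F V)) : Prop :=
  LeftReduced R ∧ ∀ p ∈ R, p.1.IsGround ∧ p.2.IsGround ∧ O.gt p.1 p.2

/-- Reflexive-transitive rewriting to an `R`-normal form. -/
def ReachNF (R : Set (Trm F V × Trm F V)) (t t' : Trm F V) : Prop :=
  Relation.ReflTransGen (Step R) t t' ∧ Irred R t'

open Classical in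
/-- The `R`-normal form `t↓_R` of `t` (via choice; unique for terminating confluent `R`). -/
def nf (R : Set (Trm F V × Trm F V)) (t : Trm F V) : Trm F V :=
  if h : ∃ t', ReachNF R t t' then h.choose else t

/-- The graph of the labeled `R`-redex multiset function `rm_R(t,m)` of Definition 1:
`RM R t m S` holds iff `S` is a possible result of collecting the labeled redexes and
recursing along some `R`-normalization of `t`. -/
inductive RM (R : Set (Trm F V × Trm F V)) : Trm F V → ℕ → Multiset (Trm F V × ℕ) → Prop
  | irred {t : Trm F V} {m : ℕ} : Irred R t → RM R t m 0
  | step_top {t t' u : Trm F V} {b : Bool} {m : ℕ} {S : Multiset (Trm F V × ℕ)} :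
      RewAt R t t' u b → (b = true ∨ 0 < m) → RM R t' m S → RM R t m ((u, m) ::ₘ S)
  | step_deep {t t' u : Trm F V} {S : Multiset (Trm F V × ℕ)} :
      RewAt R t t' u false → RM R t' 0 S → RM R t 0 ((u, 1) ::ₘ S)

open Classical in
/-- The labeled `R`-redex multiset `rm_R(t,m)` (via choice; unique under the
hypotheses of Lemma 1). -/
def rm (R : Set (Trm F V × Trm F V)) (t : Trm F V) (m : ℕ) : Multiset (Trm F V × ℕ) :=
  if h : ∃ S, RM R t m S then h.choose else 0

/-- Equational literals. -/
inductive Lit (F V : Type) : Type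
  | pos : Trm F V → Trm F V → Lit F V
  | neg : Trm F V → Trm F V → Lit F V

instance : DecidableEq (Lit F V) := Classical.decEq _

def Lit.subst (θ : V → Trm F V) : Lit F V → Lit F V
  | .pos s t => .pos (s.subst θ) (t.subst θ)
  | .neg s t => .neg (s.subst θ) (t.subst θ)

def Lit.IsGround : Lit F V → Prop
  | .pos s t => s.IsGround ∧ t.IsGround
  | .neg s t => s.IsGround ∧ t.IsGround

def Lit.posQ : Lit F V → Bool
  | .pos _ _ => true
  | .neg _ _ => false

/-- A clause is a finite multiset of literals; `⊥` is the empty clause `0`. -/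
abbrev Clause (F V : Type) := Multiset (Lit F V)

def Clause.subst (θ : V → Trm F V) (C : Clause F V) : Clause F V := C.map (Lit.subst θ)

def Clause.IsGround (C : Clause F V) : Prop := ∀ L ∈ C, L.IsGround

/-- Horn clause: at most one positive literal. -/
def IsHorn (C : Clause F V) : Prop := Multiset.card (C.filter fun L => L.posQ = true) ≤ 1

/-- The (Dershowitz-Manna) multiset extension of a relation, `M` greater than `N`. -/
def MultGT {α : Type} (r : α → α → Prop) (M N : Multiset α) : Prop :=
  ∃ X Y Z, M = Z + X ∧ N = Z + Y ∧ X ≠ 0 ∧ ∀ y ∈ Y, ∃ x ∈ X, r x y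

/-- The multiset associated to a literal for the literal ordering. -/
def Lit.mset : Lit F V → Multiset (Trm F V)
  | .pos s t => {s, t}
  | .neg s t => {s, s, t, t}

/-- The literal ordering `≻_L`. -/
def litGT (O : ReductionOrdering F V) (L L' : Lit F V) : Prop := MultGT O.gt L.mset L'.mset

/-- The clause ordering `≻_C`. -/
def clauseGT (O : ReductionOrdering F V) (C D : Clause F V) : Prop := MultGT (litGT O) C D

/-- `L` is maximal w.r.t. the rest clause `D`. -/
def MaxIn (O : ReductionOrdering F V) (L : Lit F V) (D : Clause F V) : Prop :=
  ∀ L' ∈ D, ¬ litGT O L' L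

/-- `L` is strictly maximal w.r.t. the rest clause `D`. -/
def SMaxIn (O : ReductionOrdering F V) (L : Lit F V) (D : Clause F V) : Prop :=
  ∀ L' ∈ D, ¬ litGT O L' L ∧ L' ≠ L

section TermSets

def Lit.negSubs : Lit F V → Finset (Trm F V)
  | .neg s t => s.subterms ∪ t.subterms
  | .pos _ _ => ∅

def Lit.posPSubs : Lit F V → Finset (Trm F V)
  | .pos s t => s.psubterms ∪ t.psubterms
  | .neg _ _ => ∅

def Lit.posSubs : Lit F V → Finset (Trm F V)
  | .pos s t => s.subterms ∪ t.subterms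
  | .neg _ _ => ∅

def Lit.negTops : Lit F V → Finset (Trm F V)
  | .neg s t => {s, t}
  | .pos _ _ => ∅

def Lit.posTops : Lit F V → Finset (Trm F V)
  | .pos s t => {s, t}
  | .neg _ _ => ∅

def Lit.allSubs : Lit F V → Finset (Trm F V)
  | .pos s t => s.subterms ∪ t.subterms
  | .neg s t => s.subterms ∪ t.subterms

/-- `ss⁻(C)`: subterms of sides of negative literals. -/
def ssN (C : Clause F V) : Finset (Trm F V) := C.toFinset.sup Lit.negSubs
/-- `ss⁺_{>ε}(C)`: proper subterms of sides of positive literals. -/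
def ssPp (C : Clause F V) : Finset (Trm F V) := C.toFinset.sup Lit.posPSubs
/-- All subterms of sides of positive literals. -/
def ssP (C : Clause F V) : Finset (Trm F V) := C.toFinset.sup Lit.posSubs
/-- `ts⁻(C)`: sides of negative literals. -/
def tsN (C : Clause F V) : Finset (Trm F V) := C.toFinset.sup Lit.negTops
/-- `ts⁺(C)`: sides of positive literals. -/
def tsP (C : Clause F V) : Finset (Trm F V) := C.toFinset.sup Lit.posTops
/-- All subterms occurring in `C`. -/
def allSub (C : Clause F V) : Finset (Trm F V) := C.toFinset.sup Lit.allSubs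

/-- The labeled subterm set `lss(C)` of Definition 1. -/
def lss (C : Clause F V) : Finset (Trm F V × ℕ) :=
  (ssN C).image (fun t => (t, 2)) ∪ ((ssPp C \ ssN C).image fun t => (t, 1)) ∪
    ((tsP C \ (ssPp C ∪ ssN C)).image fun t => (t, 0))

/-- The labeled topterm set `lts(C)` of Definition 1. -/
def lts (C : Clause F V) : Finset (Trm F V × ℕ) :=
  (tsN C).image (fun t => (t, 2)) ∪ ((tsP C \ tsN C).image fun t => (t, 0))

end TermSets

/-- Contribution of one labeled subterm of `C` to `nm_R(C·θ)`. -/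
def nmElt (R : Set (Trm F V × Trm F V)) (θ : V → Trm F V) : Trm F V × ℕ → Multiset (Trm F V × ℕ)
  | (.var x, m) => rm R (θ x) m
  | (.app f ts, m) => rm R (.app f (ts.map fun t => nf R (t.subst θ))) m

/-- The `R`-normalization multiset `nm_R(C·θ)` of Definition 2 (Horn case). -/
def nm (R : Set (Trm F V × Trm F V)) (C : Clause F V) (θ : V → Trm F V) :
    Multiset (Trm F V × ℕ) :=
  (lss C).sum (nmElt R θ) + (lts C).sum fun p => {(nf R (p.1.subst θ), p.2)}

/-- A closure `(C·θ)`. -/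
abbrev Closure (F V : Type) := Clause F V × (V → Trm F V)

/-- The ground instance `Cθ` represented by a closure `(C·θ)`. -/
def Closure.inst (c : Closure F V) : Clause F V := Clause.subst c.2 c.1

def Closure.IsGround (c : Closure F V) : Prop := Clause.IsGround c.inst

/-- Equality of clauses up to bijective variable renaming. -/
def ClauseAlphaEq (C D : Clause F V) : Prop :=
  ∃ ρ : V ≃ V, Clause.subst (fun x => Trm.var (ρ x)) C = D

/-- Identification of closures: equal up to bijective renaming (with the same
ground instance). -/
def CloAlphaEq (c d : Closure F V) : Prop := ClauseAlphaEq c.1 d.1 ∧ c.inst = d.inst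

/-- The tie-breaking closure ordering `≻_Clo`: an arbitrary well-founded ordering on
ground closures, total on closures with the same ground instance, such that
`(C·θ₁) ≻_Clo (D·θ₂)` whenever `Cθ₁ = Dθ₂` and `D` is an instance of `C` but not
vice versa. -/
structure TieBreak (F V : Type) where
  gt : Closure F V → Closure F V → Prop
  wf : WellFounded fun a b : Closure F V => gt b a
  total : ∀ c d : Closure F V, c.inst = d.inst → CloAlphaEq c d ∨ gt c d ∨ gt d c
  inst_gt : ∀ c d : Closure F V, c.inst = d.inst →
      (∃ σ, Clause.subst σ c.1 = d.1) → (¬ ∃ σ, Clause.subst σ d.1 = c.1) → gt c d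

/-- Lexicographic combination of `≻` and `>` on labeled terms. -/
def lexGT (O : ReductionOrdering F V) (p q : Trm F V × ℕ) : Prop :=
  O.gt p.1 q.1 ∨ (p.1 = q.1 ∧ q.2 < p.2)

/-- The `R`-normalization closure ordering `≫_R` of Definition 2 (Horn case). -/
def cloGT (O : ReductionOrdering F V) (T : TieBreak F V) (R : Set (Trm F V × Trm F V))
    (c d : Closure F V) : Prop :=
  MultGT (lexGT O) (nm R c.1 c.2) (nm R d.1 d.2)
  ∨ (nm R c.1 c.2 = nm R d.1 d.2 ∧ clauseGT O c.inst d.inst)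
  ∨ (nm R c.1 c.2 = nm R d.1 d.2 ∧ c.inst = d.inst ∧ T.gt c d)

/-- Convertibility w.r.t. a set of ground equations: the congruence generated by `E`. -/
inductive Conv (E : Set (Trm F V × Trm F V)) : Trm F V → Trm F V → Prop
  | rel {s t : Trm F V} : (s, t) ∈ E → Conv E s t
  | refl (t : Trm F V) : Conv E t t
  | symm {s t : Trm F V} : Conv E s t → Conv E t s
  | trans {s t u : Trm F V} : Conv E s t → Conv E t u → Conv E s u
  | congr {t t' : Trm F V} {f : F} {l r : List (Trm F V)} :
      Conv E t t' → Conv E (.app f (l ++ t :: r)) (.app f (l ++ t' :: r))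

/-- Truth of a literal in the equality Herbrand interpretation generated by `E`. -/
def litTrue (E : Set (Trm F V × Trm F V)) : Lit F V → Prop
  | .pos s t => Conv E s t
  | .neg s t => ¬ Conv E s t

/-- Truth of a (ground) clause in the equality Herbrand interpretation generated by `E`. -/
def ModelsC (E : Set (Trm F V × Trm F V)) (D : Clause F V) : Prop := ∃ L ∈ D, litTrue E L

/-- `R ⊨ (C·θ)`. -/
def Models (E : Set (Trm F V × Trm F V)) (c : Closure F V) : Prop := ModelsC E c.inst

/-- `σ` is an idempotent most general unifier of `s` and `s'`. -/
def IsMGU (σ : V → Trm F V) (s s' : Trm F V) : Prop :=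
  s.subst σ = s'.subst σ ∧
  ∀ τ : V → Trm F V, s.subst τ = s'.subst τ → ∀ x, (σ x).subst τ = τ x

/-- Replacement of all occurrences of `u` by `v` in a term. -/
def replAll (u v : Trm F V) : Trm F V → Trm F V
  | .var x => if Trm.var x = u then v else .var x
  | .app f ts => if Trm.app f ts = u then v else .app f (ts.attach.map fun s => replAll u v s.1)
decreasing_by
  have := List.sizeOf_lt_of_mem s.2
  simp only [Trm.app.sizeOf_spec]
  omega

/-- Replacement of all occurrences of `u` by `v` in a clause. -/
def Clause.replAll (u v : Trm F V) (C : Clause F V) : Clause F V :=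
  C.map fun L => match L with
    | .pos s t => .pos (_root_.replAll u v s) (_root_.replAll u v t)
    | .neg s t => .neg (_root_.replAll u v s) (_root_.replAll u v t)

instance : DecidableEq V := Classical.decEq _

/-- Single-point substitution `{x ↦ t}`. -/
def single (x : V) (t : Trm F V) : V → Trm F V := fun y => if y = x then t else Trm.var y

/-- Ground inferences of the Ground Closure (Horn) Superposition Calculus.
`eqres` is Equality Resolution, `ps1` is Parallel Superposition I (overlap at a
non-variable position `u`), `ps2` is Parallel Superposition II (overlap at or below
a variable `x`, with `xθ = u[tθ]` for a context `u`). -/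
inductive GInf (F V : Type) : Type
  | eqres (C' : Clause F V) (s s' : Trm F V) (σ θ : V → Trm F V)
  | ps1 (D' : Clause F V) (t t' : Trm F V) (C : Clause F V) (u : Trm F V) (σ θ : V → Trm F V)
  | ps2 (D' : Clause F V) (t t' : Trm F V) (C : Clause F V) (x : V) (u : Ctx F V) (θ : V → Trm F V)

namespace GInf

/-- The conclusion of a ground inference. -/
def concl : GInf F V → Closure F V
  | .eqres C' _ _ σ θ => (Clause.subst σ C', θ)
  | .ps1 D' _ t' C u σ θ => (Clause.subst σ (D' + Clause.replAll u t' C), θ)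
  | .ps2 D' _ t' C x u θ => (D' + C, Function.update θ x (u.fill (t'.subst θ)))

/-- The right (or only) premise of a ground inference. -/
def rprem : GInf F V → Closure F V
  | .eqres C' s s' _ θ => (C' + {Lit.neg s s'}, θ)
  | .ps1 _ _ _ C _ _ θ => (C, θ)
  | .ps2 _ _ _ C _ _ θ => (C, θ)

/-- The left premise of a (Superposition) ground inference. -/
def lprem : GInf F V → Closure F V
  | .eqres C' s s' _ θ => (C' + {Lit.neg s s'}, θ)
  | .ps1 D' t t' _ _ _ θ => (D' + {Lit.pos t t'}, θ)
  | .ps2 D' t t' _ _ _ θ => (D' + {Lit.pos t t'}, θ)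

/-- The list of premises of a ground inference. -/
def prems : GInf F V → List (Closure F V)
  | .eqres C' s s' _ θ => [(C' + {Lit.neg s s'}, θ)]
  | .ps1 D' t t' C _ _ θ => [(D' + {Lit.pos t t'}, θ), (C, θ)]
  | .ps2 D' t t' C _ _ θ => [(D' + {Lit.pos t t'}, θ), (C, θ)]

/-- Is the inference a Superposition inference? -/
def IsSup : GInf F V → Prop
  | .eqres _ _ _ _ _ => False
  | .ps1 _ _ _ _ _ _ _ => True
  | .ps2 _ _ _ _ _ _ _ => True

/-- For a Superposition inference with left premise `(D' ∨ t ≈ t' · θ)`: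
the rule `tθ → t'θ` belongs to `R`. -/
def ruleIn (R : Set (Trm F V × Trm F V)) : GInf F V → Prop
  | .eqres _ _ _ _ _ => False
  | .ps1 _ t t' _ _ _ θ => (t.subst θ, t'.subst θ) ∈ R
  | .ps2 _ t t' _ _ _ θ => (t.subst θ, t'.subst θ) ∈ R

/-- Condition (iii) of Definition 5: a Superposition inference with left premise
`(D' ∨ t ≈ t' · θ)` such that `tθ ≻ t'θ` and `(tθ → t'θ) ∉ R`. -/
def ruleNotIn (O : ReductionOrdering F V) (R : Set (Trm F V × Trm F V)) : GInf F V → Prop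
  | .eqres _ _ _ _ _ => False
  | .ps1 _ t t' _ _ _ θ => O.gt (t.subst θ) (t'.subst θ) ∧ (t.subst θ, t'.subst θ) ∉ R
  | .ps2 _ t t' _ _ _ θ => O.gt (t.subst θ) (t'.subst θ) ∧ (t.subst θ, t'.subst θ) ∉ R

end GInf

/-- The common ordering side conditions of the Parallel Superposition rules, for a
left premise `D' ∨ t ≈ t'`, right premise `C`, overlapped term (or variable) `u`,
under the ground substitution `θ`. -/
def SideConds (O : ReductionOrdering F V) (D' : Clause F V) (t t' : Trm F V)
    (C : Clause F V) (u : Trm F V) (θ : V → Trm F V) : Prop :=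
  (u ∈ ssN C ∪ ssPp C →
     clauseGT O (Clause.subst θ C) (Clause.subst θ (D' + {Lit.pos t t'}))) ∧
  (∃ s s',
      (Lit.pos s s' ∈ C ∧ u ∈ s.subterms ∧ O.gt (s.subst θ) (s'.subst θ) ∧
        SMaxIn O (Lit.subst θ (Lit.pos s s')) (Clause.subst θ (C.erase (Lit.pos s s')))) ∨
      (Lit.neg s s' ∈ C ∧ u ∈ s.subterms ∧ O.gt (s.subst θ) (s'.subst θ) ∧
        MaxIn O (Lit.subst θ (Lit.neg s s')) (Clause.subst θ (C.erase (Lit.neg s s'))))) ∧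
  SMaxIn O (Lit.subst θ (Lit.pos t t')) (Clause.subst θ D') ∧
  O.gt (t.subst θ) (t'.subst θ)

/-- Validity of a ground inference: all side conditions of the corresponding rule of
the Ground Closure Horn Superposition Calculus hold. -/
def GInf.IsInf (O : ReductionOrdering F V) : GInf F V → Prop
  | .eqres C' s s' σ θ =>
      Closure.IsGround (C' + {Lit.neg s s'}, θ) ∧
      s.subst θ = s'.subst θ ∧ IsMGU σ s s' ∧
      MaxIn O (Lit.subst θ (Lit.neg s s')) (Clause.subst θ C')
  | .ps1 D' t t' C u σ θ =>
      Closure.IsGround (D' + {Lit.pos t t'}, θ) ∧ Closure.IsGround (C, θ) ∧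
      (¬ ∃ x, u = Trm.var x) ∧ t.subst θ = u.subst θ ∧ IsMGU σ t u ∧
      u ∈ allSub C ∧ SideConds O D' t t' C u θ
  | .ps2 D' t t' C x u θ =>
      Closure.IsGround (D' + {Lit.pos t t'}, θ) ∧ Closure.IsGround (C, θ) ∧
      Trm.var x ∈ allSub C ∧ θ x = u.fill (t.subst θ) ∧
      SideConds O D' t t' C (Trm.var x) θ

/-- Redundant closures (Definition 3). -/
def RedC (O : ReductionOrdering F V) (T : TieBreak F V) (N : Set (Closure F V))
    (c : Closure F V) : Prop :=
  ∀ R, GoodRS O R → Models R c ∨ ∃ d ∈ N, cloGT O T R c d ∧ ¬ Models R d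

/-- Redundant inferences (Definition 4). -/
def RedI (O : ReductionOrdering F V) (T : TieBreak F V) (N : Set (Closure F V))
    (ι : GInf F V) : Prop :=
  ∀ R, GoodRS O R →
    Models R ι.concl
    ∨ (∃ c ∈ N, cloGT O T R ι.rprem c ∧ ¬ Models R c)
    ∨ ι.ruleNotIn O R
    ∨ (ι.IsSup ∧ cloGT O T R ι.lprem ι.rprem)

section Candidate

/-- `s` is a strictly maximal term of the ground clause `D` and occurs in `D` only
(at the top) in positive literals. -/
def StrictMaxTermPos (O : ReductionOrdering F V) (D : Clause F V) (s : Trm F V) : Prop :=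
  (∀ w ∈ allSub D, w = s ∨ O.gt s w) ∧ s ∉ ssN D ∧ s ∉ ssPp D ∧ s ∈ tsP D

/-- The productivity conditions (Horn case) for the closure `(C' ∨ u ≈ u' · θ) ∈ N`
w.r.t. the partial interpretation `Rs`. -/
def ProdConds (O : ReductionOrdering F V) (N : Set (Closure F V))
    (Rs : Set (Trm F V × Trm F V)) (C' : Clause F V) (u u' : Trm F V)
    (θ : V → Trm F V) : Prop :=
  (C' + {Lit.pos u u'}, θ) ∈ N ∧
  Closure.IsGround (C' + {Lit.pos u u'}, θ) ∧
  StrictMaxTermPos O (Clause.subst θ (C' + {Lit.pos u u'})) (u.subst θ) ∧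
  Irred Rs (u.subst θ) ∧
  ¬ Models Rs (C' + {Lit.pos u u'}, θ) ∧
  O.gt (u.subst θ) (u'.subst θ)

/-- `(C' ∨ u ≈ u' · θ)` is the `≫_{Rs}`-smallest closure in `N` satisfying the
productivity conditions for the left-hand side `s`. -/
def ProducesFor (O : ReductionOrdering F V) (T : TieBreak F V) (N : Set (Closure F V))
    (Rs : Set (Trm F V × Trm F V)) (s : Trm F V) (C' : Clause F V) (u u' : Trm F V)
    (θ : V → Trm F V) : Prop :=
  u.subst θ = s ∧ ProdConds O N Rs C' u u' θ ∧
  ∀ D' v v' θ', v.subst θ' = s → ProdConds O N Rs D' v v' θ' →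
    (D' + {Lit.pos v v'}, θ') = (C' + {Lit.pos u u'}, θ) ∨
    cloGT O T Rs (D' + {Lit.pos v v'}, θ') (C' + {Lit.pos u u'}, θ)

/-- `R_s = ⋃_{t ≺ s} E_t`. -/
def Rbelow (O : ReductionOrdering F V) (E : Trm F V → Set (Trm F V × Trm F V))
    (s : Trm F V) : Set (Trm F V × Trm F V) :=
  { p | ∃ t, O.gt s t ∧ p ∈ E t }

/-- `R_* = ⋃_t E_t`. -/
def Rstar (E : Trm F V → Set (Trm F V × Trm F V)) : Set (Trm F V × Trm F V) :=
  { p | ∃ t, p ∈ E t }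

/-- `E` is the family of rule sets of the candidate interpretation constructed from `N`:
`E s = {s → u'θ}` for the `≫_{R_s}`-smallest productive closure for `s` if one
exists, and `E s = ∅` otherwise. -/
def IsCandidate (O : ReductionOrdering F V) (T : TieBreak F V) (N : Set (Closure F V))
    (E : Trm F V → Set (Trm F V × Trm F V)) : Prop :=
  ∀ s : Trm F V,
    (∃ C' u u' θ, ProducesFor O T N (Rbelow O E s) s C' u u' θ ∧
        E s = {(s, u'.subst θ)})
    ∨ ((¬ ∃ C' u u' θ, ProducesFor O T N (Rbelow O E s) s C' u u' θ) ∧ E s = ∅)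

/-- The closure `(C' ∨ u ≈ u' · θ)` produces the rule `uθ → u'θ` in the candidate
interpretation given by `E`. -/
def ProducesRule (O : ReductionOrdering F V) (T : TieBreak F V) (N : Set (Closure F V))
    (E : Trm F V → Set (Trm F V × Trm F V)) (C' : Clause F V) (u u' : Trm F V)
    (θ : V → Trm F V) : Prop :=
  ProducesFor O T N (Rbelow O E (u.subst θ)) (u.subst θ) C' u u' θ ∧
  E (u.subst θ) = {(u.subst θ, u'.subst θ)}

end Candidate

section NonHorn

/-- The graph of the (non-Horn) `R`-redex multiset function `rm_R(t)` of Definition 7. -/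
inductive RMn (R : Set (Trm F V × Trm F V)) :
    Trm F V → Multiset (Multiset (Trm F V)) → Prop
  | irred {t : Trm F V} : Irred R t → RMn R t 0
  | step {t t' u : Trm F V} {b : Bool} {S : Multiset (Multiset (Trm F V))} :
      RewAt R t t' u b → RMn R t' S → RMn R t (({u, u} : Multiset (Trm F V)) ::ₘ S)

open Classical in
/-- The (non-Horn) `R`-redex multiset `rm_R(t)` (via choice). -/
def rmN (R : Set (Trm F V × Trm F V)) (t : Trm F V) : Multiset (Multiset (Trm F V)) :=
  if h : ∃ S, RMn R t S then h.choose else 0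

/-- Contribution of one subterm of a negative literal to the non-Horn `nm_R(C·θ)`. -/
def nmNElt (R : Set (Trm F V × Trm F V)) (θ : V → Trm F V) :
    Trm F V → Multiset (Multiset (Trm F V))
  | .var x => rmN R (θ x)
  | .app f ts => rmN R (.app f (ts.map fun t => nf R (t.subst θ)))

/-- The non-Horn `R`-normalization multiset `nm_R(C·θ)` of Definition 8. -/
def nmN (R : Set (Trm F V × Trm F V)) (C : Clause F V) (θ : V → Trm F V) :
    Multiset (Multiset (Trm F V)) :=
  (ssN C).sum (nmNElt R θ) +
  (tsN C).sum (fun t => {({nf R (t.subst θ), nf R (t.subst θ)} : Multiset (Trm F V))}) +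
  (C.map fun L => match L with
     | .pos s s' => (({({s.subst θ, s'.subst θ} : Multiset (Trm F V))}) :
         Multiset (Multiset (Trm F V)))
     | .neg _ _ => 0).sum

/-- The non-Horn `R`-normalization closure ordering `≫_R` of Definition 8. -/
def cloGTN (O : ReductionOrdering F V) (T : TieBreak F V) (R : Set (Trm F V × Trm F V))
    (c d : Closure F V) : Prop :=
  MultGT (MultGT O.gt) (nmN R c.1 c.2) (nmN R d.1 d.2)
  ∨ (nmN R c.1 c.2 = nmN R d.1 d.2 ∧ clauseGT O c.inst d.inst)
  ∨ (nmN R c.1 c.2 = nmN R d.1 d.2 ∧ c.inst = d.inst ∧ T.gt c d)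

end NonHorn

section Lifting

/-- The set `G(N)` of ground closures of a set `N` of clauses. -/
def GClosures (N : Set (Clause F V)) : Set (Closure F V) :=
  { c | c.1 ∈ N ∧ c.IsGround }

/-- The ordering side conditions of the non-ground Parallel Superposition rule, for
left premise `D' ∨ t ≈ t'`, right premise `C`, overlapped non-variable subterm `u`,
and mgu `σ`. -/
def NGSideConds (O : ReductionOrdering F V) (D' : Clause F V) (t t' : Trm F V)
    (C : Clause F V) (u : Trm F V) (σ : V → Trm F V) : Prop :=
  (u ∈ ssN C ∪ ssPp C →
     ¬ (clauseGT O (Clause.subst σ (D' + {Lit.pos t t'})) (Clause.subst σ C) ∨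
        Clause.subst σ C = Clause.subst σ (D' + {Lit.pos t t'}))) ∧
  (∃ s s',
      (Lit.pos s s' ∈ C ∧ u ∈ s.subterms ∧
        ¬ (O.gt (s'.subst σ) (s.subst σ) ∨ s.subst σ = s'.subst σ) ∧
        SMaxIn O (Lit.subst σ (Lit.pos s s')) (Clause.subst σ (C.erase (Lit.pos s s')))) ∨
      (Lit.neg s s' ∈ C ∧ u ∈ s.subterms ∧
        ¬ (O.gt (s'.subst σ) (s.subst σ) ∨ s.subst σ = s'.subst σ) ∧
        MaxIn O (Lit.subst σ (Lit.neg s s')) (Clause.subst σ (C.erase (Lit.neg s s'))))) ∧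
  SMaxIn O (Lit.subst σ (Lit.pos t t')) (Clause.subst σ D') ∧
  ¬ (O.gt (t'.subst σ) (t.subst σ) ∨ t.subst σ = t'.subst σ)

/-- The ground inference `ι` is a ground instance of an inference of the
(non-ground) Horn Superposition Calculus with Parallel Superposition whose
premises are exactly the clauses occurring in the premise closures of `ι`. -/
def IsGroundInstOfNG (O : ReductionOrdering F V) : GInf F V → Prop
  | .eqres C' s s' σ _ =>
      IsMGU σ s s' ∧
      MaxIn O (Lit.subst σ (Lit.neg s s')) (Clause.subst σ C')
  | .ps1 D' t t' C u σ _ =>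
      (¬ ∃ x, u = Trm.var x) ∧ IsMGU σ t u ∧ u ∈ allSub C ∧
      NGSideConds O D' t t' C u σ
  | .ps2 _ _ _ _ _ _ _ => False

/-- Non-ground inferences of the Horn Superposition Calculus with Parallel
Superposition. -/
inductive NGInf (F V : Type) : Type
  | eqres (C' : Clause F V) (s s' : Trm F V) (σ : V → Trm F V)
  | psup (D' : Clause F V) (t t' : Trm F V) (C : Clause F V) (u : Trm F V) (σ : V → Trm F V)

namespace NGInf

/-- Side conditions of the non-ground rules. -/
def IsInf (O : ReductionOrdering F V) : NGInf F V → Prop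
  | .eqres C' s s' σ =>
      IsMGU σ s s' ∧ MaxIn O (Lit.subst σ (Lit.neg s s')) (Clause.subst σ C')
  | .psup D' t t' C u σ =>
      (¬ ∃ x, u = Trm.var x) ∧ IsMGU σ t u ∧ u ∈ allSub C ∧
      NGSideConds O D' t t' C u σ

/-- Premises of a non-ground inference. -/
def prems : NGInf F V → List (Clause F V)
  | .eqres C' s s' _ => [C' + {Lit.neg s s'}]
  | .psup D' t t' C _ _ => [D' + {Lit.pos t t'}, C]

/-- Conclusion of a non-ground inference. -/
def concl : NGInf F V → Clause F V
  | .eqres C' _ _ σ => Clause.subst σ C'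
  | .psup D' _ t' C u σ => Clause.subst σ (D' + Clause.replAll u t' C)

/-- The set `G(ι)` of ground instances of a non-ground inference. -/
def GInsts (O : ReductionOrdering F V) : NGInf F V → Set (GInf F V)
  | .eqres C' s s' σ => { g | ∃ θ, g = GInf.eqres C' s s' σ θ ∧ g.IsInf O }
  | .psup D' t t' C u σ => { g | ∃ θ, g = GInf.ps1 D' t t' C u σ θ ∧ g.IsInf O }

end NGInf

end Lifting

/- ===== Auxiliary infrastructure for the proof ===== -/

section AuxTerm
variable {F V : Type}

namespace Trm

theorem indOn {motive : Trm F V → Prop} (hv : ∀ x, motive (var x))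
    (ha : ∀ f ts, (∀ t ∈ ts, motive t) → motive (app f ts)) : ∀ t, motive t := by
  have key : ∀ n (t : Trm F V), sizeOf t ≤ n → motive t := by
    intro n
    induction n with
    | zero =>
      intro t ht
      cases t with
      | var x => simp [Trm.var.sizeOf_spec] at ht
      | app f ts => simp [Trm.app.sizeOf_spec] at ht
    | succ n ih =>
      intro t ht
      cases t with
      | var x => exact hv x
      | app f ts =>
        refine ha f ts fun u hu => ih u ?_
        have h1 := List.sizeOf_lt_of_mem hu
        have h2 : sizeOf (Trm.app f ts) = 1 + sizeOf f + sizeOf ts := by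
          simp [Trm.app.sizeOf_spec]
        omega
  exact fun t => key (sizeOf t) t le_rfl

@[simp] theorem subst_var (θ : V → Trm F V) (x : V) : (var x).subst θ = θ x := by
  rw [Trm.subst]

@[simp] theorem subst_app (θ : V → Trm F V) (f : F) (ts : List (Trm F V)) :
    (app f ts).subst θ = app f (ts.map (Trm.subst θ)) := by
  rw [Trm.subst]
  congr 1
  exact List.attach_map_val (l := ts) (f := Trm.subst θ)

theorem mem_foldr_union {α : Type} [DecidableEq α] (l : List (Finset α)) (b : α) :
    b ∈ l.foldr (· ∪ ·) ∅ ↔ ∃ a ∈ l, b ∈ a := by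
  induction l with
  | nil => simp
  | cons x l ih => simp [ih]

theorem mem_subterms_app {f : F} {ts : List (Trm F V)} {u : Trm F V} :
    u ∈ (app f ts).subterms ↔ u = app f ts ∨ ∃ t ∈ ts, u ∈ t.subterms := by
  rw [Trm.subterms]
  rw [show (ts.attach.map fun t => Trm.subterms t.1) = ts.map Trm.subterms from
    List.attach_map_val (l := ts) (f := Trm.subterms)]
  rw [Finset.mem_insert, mem_foldr_union]
  simp

theorem mem_subterms_var {x : V} {u : Trm F V} :
    u ∈ (var x : Trm F V).subterms ↔ u = var x := by
  rw [Trm.subterms]; simp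

theorem self_mem_subterms (t : Trm F V) : t ∈ t.subterms := by
  cases t with
  | var x => exact mem_subterms_var.2 rfl
  | app f ts => exact mem_subterms_app.2 (Or.inl rfl)

theorem mem_psubterms_app {f : F} {ts : List (Trm F V)} {u : Trm F V} :
    u ∈ (app f ts).psubterms ↔ ∃ t ∈ ts, u ∈ t.subterms := by
  rw [Trm.psubterms, mem_foldr_union]
  simp

theorem mem_psubterms_var {x : V} {u : Trm F V} :
    u ∈ (var x : Trm F V).psubterms ↔ False := by
  rw [Trm.psubterms]; simp

theorem psubterms_subset_subterms {t u : Trm F V} (h : u ∈ t.psubterms) : u ∈ t.subterms := by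
  cases t with
  | var x => exact absurd h (by rw [Trm.psubterms]; simp)
  | app f ts => exact mem_subterms_app.2 (Or.inr (mem_psubterms_app.1 h))

theorem subst_mem_subterms {t u : Trm F V} (θ : V → Trm F V) (h : u ∈ t.subterms) :
    u.subst θ ∈ (t.subst θ).subterms := by
  induction t using Trm.indOn with
  | hv x =>
    rw [mem_subterms_var.1 h, subst_var]
    exact self_mem_subterms _
  | ha f ts ih =>
    rcases mem_subterms_app.1 h with rfl | ⟨t', ht', hu⟩
    · exact self_mem_subterms _
    · rw [subst_app]
      exact mem_subterms_app.2 (Or.inr ⟨t'.subst θ, List.mem_map_of_mem (f := Trm.subst θ) ht', ih t' ht' hu⟩)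

theorem subst_mem_psubterms {t u : Trm F V} (θ : V → Trm F V) (h : u ∈ t.psubterms) :
    u.subst θ ∈ (t.subst θ).psubterms := by
  cases t with
  | var x => exact absurd h (by rw [Trm.psubterms]; simp)
  | app f ts =>
    obtain ⟨t', ht', hu⟩ := mem_psubterms_app.1 h
    rw [subst_app]
    exact mem_psubterms_app.2 ⟨t'.subst θ, List.mem_map_of_mem (f := Trm.subst θ) ht', subst_mem_subterms θ hu⟩

theorem isGround_app_iff {f : F} {ts : List (Trm F V)} :
    (app f ts).IsGround ↔ ∀ t ∈ ts, t.IsGround := by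
  constructor
  · intro h; cases h with | app h => exact h
  · exact IsGround.app

theorem isGround_of_mem_subterms {t u : Trm F V} (hg : t.IsGround) (h : u ∈ t.subterms) :
    u.IsGround := by
  induction t using Trm.indOn with
  | hv x => cases hg
  | ha f ts ih =>
    rcases mem_subterms_app.1 h with rfl | ⟨t', ht', hu⟩
    · exact hg
    · exact ih t' ht' (isGround_app_iff.1 hg t' ht') hu

end Trm

end AuxTerm
section AuxOrd
variable {F V : Type} (O : ReductionOrdering F V)

theorem no_descent (g : ℕ → Trm F V) (h : ∀ n, O.gt (g n) (g (n + 1))) : False := by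
  obtain ⟨m, ⟨n, rfl⟩, hmin⟩ := O.wf.has_min (Set.range g) ⟨g 0, ⟨0, rfl⟩⟩
  exact hmin (g (n + 1)) ⟨n + 1, rfl⟩ (h n)

theorem O_gt_irrefl (t : Trm F V) : ¬ O.gt t t := fun h =>
  no_descent O (fun _ => t) (fun _ => h)

theorem gt_app_arg (f : F) (l r : List (Trm F V)) (w : Trm F V)
    (hg : (Trm.app f (l ++ w :: r)).IsGround) : O.gt (Trm.app f (l ++ w :: r)) w := by
  have hwg : w.IsGround := Trm.isGround_app_iff.1 hg w (by simp)
  by_contra hlt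
  have hne : w ≠ Trm.app f (l ++ w :: r) := by
    intro h
    have h1 : sizeOf w < sizeOf (l ++ w :: r) := List.sizeOf_lt_of_mem (by simp)
    have h2 : sizeOf (Trm.app f (l ++ w :: r)) = 1 + sizeOf f + sizeOf (l ++ w :: r) := by
      simp [Trm.app.sizeOf_spec]
    have := congrArg sizeOf h
    omega
  have hgt : O.gt w (Trm.app f (l ++ w :: r)) := (O.total_ground hwg hg hne).resolve_right hlt
  let g : ℕ → Trm F V := fun n => Nat.rec w (fun _ ih => Trm.app f (l ++ ih :: r)) n
  have hstep : ∀ n, O.gt (g n) (g (n + 1)) := by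
    intro n
    induction n with
    | zero => exact hgt
    | succ n ih => exact O.compat_ctx f l r ih
  exact no_descent O g hstep

/-- Rules are ground and decreasing. -/
def RulesOK (R : Set (Trm F V × Trm F V)) : Prop :=
  ∀ p ∈ R, p.1.IsGround ∧ p.2.IsGround ∧ O.gt p.1 p.2

theorem rewAt_mono {R R' : Set (Trm F V × Trm F V)} (hsub : R ⊆ R')
    {t t' u : Trm F V} {b : Bool} (h : RewAt R t t' u b) : RewAt R' t t' u b := by
  induction h with
  | root h => exact .root (hsub h)
  | congr _ ih => exact .congr ih

theorem step_mono {R R' : Set (Trm F V × Trm F V)} (hsub : R ⊆ R')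
    {t t' : Trm F V} (h : Step R t t') : Step R' t t' := by
  obtain ⟨u, b, h⟩ := h
  exact ⟨u, b, rewAt_mono hsub h⟩

theorem rewAt_gt {R : Set (Trm F V × Trm F V)} (hR : ∀ p ∈ R, O.gt p.1 p.2)
    {t t' u : Trm F V} {b : Bool} (h : RewAt R t t' u b) : O.gt t t' := by
  induction h with
  | root h => exact hR _ h
  | congr _ ih => exact O.compat_ctx _ _ _ ih

theorem rewAt_facts {R : Set (Trm F V × Trm F V)} (hR : RulesOK O R)
    {t t' u : Trm F V} {b : Bool} (h : RewAt R t t' u b) :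
    t.IsGround → (t = u ∨ O.gt t u) ∧ O.gt t t' ∧ t'.IsGround := by
  induction h with
  | root h => exact fun _ => ⟨Or.inl rfl, (hR _ h).2.2, (hR _ h).2.1⟩
  | @congr w w' u b f l r hrw ih =>
    intro hg
    have hw : w.IsGround := Trm.isGround_app_iff.1 hg w (by simp)
    obtain ⟨hu, hgt, hg'⟩ := ih hw
    have hTw : O.gt (Trm.app f (l ++ w :: r)) w := gt_app_arg O f l r w hg
    refine ⟨Or.inr ?_, O.compat_ctx f l r hgt, ?_⟩
    · rcases hu with rfl | h
      · exact hTw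
      · exact O.trans hTw h
    · refine Trm.IsGround.app ?_
      intro x hx
      rcases List.mem_append.1 hx with h | h
      · exact Trm.isGround_app_iff.1 hg x (by simp [h])
      · rcases List.mem_cons.1 h with rfl | h
        · exact hg'
        · exact Trm.isGround_app_iff.1 hg x (by simp [h])

theorem step_facts {R : Set (Trm F V × Trm F V)} (hR : RulesOK O R)
    {t t' : Trm F V} (h : Step R t t') (hg : t.IsGround) :
    O.gt t t' ∧ t'.IsGround := by
  obtain ⟨u, b, h⟩ := h
  exact ⟨(rewAt_facts O hR h hg).2.1, (rewAt_facts O hR h hg).2.2⟩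

theorem step_gt {R : Set (Trm F V × Trm F V)} (hR : ∀ p ∈ R, O.gt p.1 p.2)
    {t t' : Trm F V} (h : Step R t t') : O.gt t t' := by
  obtain ⟨u, b, h⟩ := h
  exact rewAt_gt O hR h

theorem rtg_ge {R : Set (Trm F V × Trm F V)} (hR : ∀ p ∈ R, O.gt p.1 p.2)
    {t t' : Trm F V} (h : Relation.ReflTransGen (Step R) t t') : t = t' ∨ O.gt t t' := by
  induction h with
  | refl => exact Or.inl rfl
  | tail h₁ h₂ ih =>
    have := step_gt O hR h₂
    rcases ih with rfl | h
    · exact Or.inr this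
    · exact Or.inr (O.trans h this)

theorem rtg_ground {R : Set (Trm F V × Trm F V)} (hR : RulesOK O R)
    {t t' : Trm F V} (h : Relation.ReflTransGen (Step R) t t') (hg : t.IsGround) :
    t'.IsGround := by
  induction h with
  | refl => exact hg
  | tail h₁ h₂ ih => exact (step_facts O hR h₂ ih).2

theorem exists_RM {R : Set (Trm F V × Trm F V)} (hR : ∀ p ∈ R, O.gt p.1 p.2) :
    ∀ (t : Trm F V) (m : ℕ), ∃ S, RM R t m S := by
  intro t
  induction t using O.wf.induction with
  | _ t ih =>
    intro m
    by_cases h : Irred R t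
    · exact ⟨0, .irred h⟩
    · simp only [Irred, not_forall, not_not] at h
      obtain ⟨t', u, b, hrw⟩ := h
      have hgt : O.gt t t' := rewAt_gt O hR hrw
      cases b with
      | true =>
        obtain ⟨S, hS⟩ := ih t' hgt m
        exact ⟨(u, m) ::ₘ S, .step_top hrw (Or.inl rfl) hS⟩
      | false =>
        cases m with
        | zero =>
          obtain ⟨S, hS⟩ := ih t' hgt 0
          exact ⟨(u, 1) ::ₘ S, .step_deep hrw hS⟩
        | succ m =>
          obtain ⟨S, hS⟩ := ih t' hgt (m + 1)
          exact ⟨(u, m + 1) ::ₘ S, .step_top hrw (Or.inr (Nat.succ_pos m)) hS⟩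

theorem exists_reachNF {R : Set (Trm F V × Trm F V)} (hR : ∀ p ∈ R, O.gt p.1 p.2) :
    ∀ (t : Trm F V), ∃ t', ReachNF R t t' := by
  intro t
  induction t using O.wf.induction with
  | _ t ih =>
    by_cases h : Irred R t
    · exact ⟨t, .refl, h⟩
    · simp only [Irred, not_forall, not_not] at h
      obtain ⟨t'', hst⟩ := h
      obtain ⟨t', hrtg, hirr⟩ := ih t'' (step_gt O hR hst)
      exact ⟨t', .head hst hrtg, hirr⟩

theorem rm_spec {R : Set (Trm F V × Trm F V)} (hR : ∀ p ∈ R, O.gt p.1 p.2)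
    (t : Trm F V) (m : ℕ) : RM R t m (rm R t m) := by
  have hex := exists_RM O hR t m
  rw [rm, dif_pos hex]
  exact hex.choose_spec

theorem nf_spec {R : Set (Trm F V × Trm F V)} (hR : ∀ p ∈ R, O.gt p.1 p.2)
    (t : Trm F V) : ReachNF R t (nf R t) := by
  have hex := exists_reachNF O hR t
  rw [nf, dif_pos hex]
  exact hex.choose_spec

theorem nf_ge {R : Set (Trm F V × Trm F V)} (hR : ∀ p ∈ R, O.gt p.1 p.2)
    (t : Trm F V) : t = nf R t ∨ O.gt t (nf R t) :=
  rtg_ge O hR (nf_spec O hR t).1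

theorem nf_ground {R : Set (Trm F V × Trm F V)} (hR : RulesOK O R)
    {t : Trm F V} (hg : t.IsGround) : (nf R t).IsGround :=
  rtg_ground O hR (nf_spec O (fun p hp => (hR p hp).2.2) t).1 hg

theorem RM_elem {R : Set (Trm F V × Trm F V)} (hR : RulesOK O R)
    {t : Trm F V} {m : ℕ} {S : Multiset (Trm F V × ℕ)} (h : RM R t m S) :
    t.IsGround → ∀ p ∈ S, t = p.1 ∨ O.gt t p.1 := by
  induction h with
  | irred _ => intro _ p hp; simp at hp
  | @step_top t t' u b m S hrw hb hS ih =>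
    intro hg p hp
    obtain ⟨hu, hgt, hg'⟩ := rewAt_facts O hR hrw hg
    rcases Multiset.mem_cons.1 hp with rfl | hp
    · exact hu
    · rcases ih hg' p hp with rfl | h
      · exact Or.inr hgt
      · exact Or.inr (O.trans hgt h)
  | @step_deep t t' u S hrw hS ih =>
    intro hg p hp
    obtain ⟨hu, hgt, hg'⟩ := rewAt_facts O hR hrw hg
    rcases Multiset.mem_cons.1 hp with rfl | hp
    · exact hu
    · rcases ih hg' p hp with rfl | h
      · exact Or.inr hgt
      · exact Or.inr (O.trans hgt h)

theorem nf_of_irred {R : Set (Trm F V × Trm F V)} {t : Trm F V} (h : Irred R t) :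
    nf R t = t := by
  have hex : ∃ t', ReachNF R t t' := ⟨t, .refl, h⟩
  rw [nf, dif_pos hex]
  have hspec := hex.choose_spec
  rcases hspec.1.cases_head with heq | ⟨c, hst, _⟩
  · exact heq.symm
  · exact absurd hst (h c)

theorem RM_irred_eq {R : Set (Trm F V × Trm F V)} {t : Trm F V} {m : ℕ}
    {S : Multiset (Trm F V × ℕ)} (h : Irred R t) (hS : RM R t m S) : S = 0 := by
  cases hS with
  | irred _ => rfl
  | step_top hrw _ _ => exact absurd ⟨_, _, hrw⟩ (h _)
  | step_deep hrw _ => exact absurd ⟨_, _, hrw⟩ (h _)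

theorem rm_of_irred {R : Set (Trm F V × Trm F V)} {t : Trm F V} {m : ℕ} (h : Irred R t) :
    rm R t m = 0 := by
  have hex : ∃ S, RM R t m S := ⟨0, .irred h⟩
  rw [rm, dif_pos hex]
  exact RM_irred_eq h hex.choose_spec

end AuxOrd
section AuxCone
variable {F V : Type}

/-- Hypotheses for the "cone" argument: `K` is a set of ground terms downward closed
and closed under immediate subterms, on which `R₂`-rewriting coincides with
`R₁`-rewriting. -/
structure ConeHyps (O : ReductionOrdering F V) (R₁ R₂ : Set (Trm F V × Trm F V))
    (K : Trm F V → Prop) : Prop where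
  hsub : R₁ ⊆ R₂
  hOK : RulesOK O R₂
  hKg : ∀ w, K w → w.IsGround
  hKroot : ∀ p ∈ R₂, ∀ w, K w → p.1 = w → p ∈ R₁
  hKdown : ∀ w w', K w → w'.IsGround → O.gt w w' → K w'
  hKarg : ∀ f l x r, K (Trm.app f (l ++ x :: r)) → K x

variable {O : ReductionOrdering F V} {R₁ R₂ : Set (Trm F V × Trm F V)} {K : Trm F V → Prop}

open Classical in
theorem choose_congr {α : Type} {p q : α → Prop} (h : p = q) (d : α) :
    (if h' : ∃ x, p x then h'.choose else d) = (if h' : ∃ x, q x then h'.choose else d) := by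
  subst h; rfl

namespace ConeHyps

theorem rewAt_iff (hc : ConeHyps O R₁ R₂ K) {t t' u : Trm F V} {b : Bool} (hK : K t) :
    RewAt R₂ t t' u b ↔ RewAt R₁ t t' u b := by
  have fwd : ∀ {t t' u b}, RewAt R₂ t t' u b → K t → RewAt R₁ t t' u b := by
    intro t t' u b h
    induction h with
    | root hmem => intro hK; exact .root (hc.hKroot _ hmem _ hK rfl)
    | @congr w w' u b f l r hrw ih => intro hK; exact .congr (ih (hc.hKarg f l w r hK))
  exact ⟨fun h => fwd h hK, rewAt_mono hc.hsub⟩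

theorem step_iff (hc : ConeHyps O R₁ R₂ K) {t t' : Trm F V} (hK : K t) :
    Step R₂ t t' ↔ Step R₁ t t' := by
  constructor
  · rintro ⟨u, b, h⟩; exact ⟨u, b, (hc.rewAt_iff hK).1 h⟩
  · exact step_mono hc.hsub

theorem K_step (hc : ConeHyps O R₁ R₂ K) {t t' : Trm F V} (hK : K t) (h : Step R₂ t t') :
    K t' := by
  obtain ⟨hgt, hg⟩ := step_facts O hc.hOK h (hc.hKg t hK)
  exact hc.hKdown _ _ hK hg hgt

theorem K_rtg (hc : ConeHyps O R₁ R₂ K) {t t' : Trm F V}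
    (h : Relation.ReflTransGen (Step R₂) t t') : K t → K t' := by
  induction h using Relation.ReflTransGen.head_induction_on with
  | refl => exact id
  | head h' _ ih => exact fun hK => ih (hc.K_step hK h')

theorem rtg_iff (hc : ConeHyps O R₁ R₂ K) {t t' : Trm F V} (hK : K t) :
    Relation.ReflTransGen (Step R₂) t t' ↔ Relation.ReflTransGen (Step R₁) t t' := by
  have fwd : ∀ {t t' : Trm F V}, Relation.ReflTransGen (Step R₂) t t' → K t →
      Relation.ReflTransGen (Step R₁) t t' := by
    intro t t' h
    induction h using Relation.ReflTransGen.head_induction_on with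
    | refl => exact fun _ => .refl
    | head h' _ ih =>
      exact fun hK => .head ((hc.step_iff hK).1 h') (ih (hc.K_step hK h'))
  exact ⟨fun h => fwd h hK, Relation.ReflTransGen.mono (r := Step R₁) (p := Step R₂) (fun a b => step_mono hc.hsub) t t'⟩

theorem irred_iff (hc : ConeHyps O R₁ R₂ K) {t : Trm F V} (hK : K t) :
    Irred R₂ t ↔ Irred R₁ t := by
  constructor
  · intro h x hst; exact h x (step_mono hc.hsub hst)
  · intro h x hst; exact h x ((hc.step_iff hK).1 hst)

theorem reachNF_iff (hc : ConeHyps O R₁ R₂ K) {t t' : Trm F V} (hK : K t) :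
    ReachNF R₂ t t' ↔ ReachNF R₁ t t' := by
  constructor
  · rintro ⟨hrtg, hirr⟩
    exact ⟨(hc.rtg_iff hK).1 hrtg, (hc.irred_iff (hc.K_rtg hrtg hK)).1 hirr⟩
  · rintro ⟨hrtg, hirr⟩
    have hrtg₂ : Relation.ReflTransGen (Step R₂) t t' := (hc.rtg_iff hK).2 hrtg
    exact ⟨hrtg₂, (hc.irred_iff (hc.K_rtg hrtg₂ hK)).2 hirr⟩

theorem nf_eq (hc : ConeHyps O R₁ R₂ K) (t : Trm F V) (hK : K t) : nf R₂ t = nf R₁ t := by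
  have hpred : ReachNF R₂ t = ReachNF R₁ t := funext fun t' => propext (hc.reachNF_iff hK)
  simp only [nf]
  exact choose_congr hpred t

theorem RM_iff (hc : ConeHyps O R₁ R₂ K) {t : Trm F V} (hK : K t) (m : ℕ)
    (S : Multiset (Trm F V × ℕ)) : RM R₂ t m S ↔ RM R₁ t m S := by
  have fwd : ∀ {t m S}, RM R₂ t m S → K t → RM R₁ t m S := by
    intro t m S h
    induction h with
    | irred hI => exact fun _ => .irred (fun x hst => hI x (step_mono hc.hsub hst))
    | step_top hrw hb _ ih =>
      intro hK
      exact .step_top ((hc.rewAt_iff hK).1 hrw) hb (ih (hc.K_step hK ⟨_, _, hrw⟩))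
    | step_deep hrw _ ih =>
      intro hK
      exact .step_deep ((hc.rewAt_iff hK).1 hrw) (ih (hc.K_step hK ⟨_, _, hrw⟩))
  have bwd : ∀ {t m S}, RM R₁ t m S → K t → RM R₂ t m S := by
    intro t m S h
    induction h with
    | irred hI => exact fun hK => .irred ((hc.irred_iff hK).2 hI)
    | step_top hrw hb _ ih =>
      intro hK
      have hrw₂ := rewAt_mono hc.hsub hrw
      exact .step_top hrw₂ hb (ih (hc.K_step hK ⟨_, _, hrw₂⟩))
    | step_deep hrw _ ih =>
      intro hK
      have hrw₂ := rewAt_mono hc.hsub hrw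
      exact .step_deep hrw₂ (ih (hc.K_step hK ⟨_, _, hrw₂⟩))
  exact ⟨fun h => fwd h hK, fun h => bwd h hK⟩

theorem rm_eq (hc : ConeHyps O R₁ R₂ K) (t : Trm F V) (hK : K t) (m : ℕ) :
    rm R₂ t m = rm R₁ t m := by
  have hpred : RM R₂ t m = RM R₁ t m := funext fun S => propext (hc.RM_iff hK m S)
  simp only [rm]
  exact choose_congr hpred 0

end ConeHyps

end AuxCone
section AuxNmElt
variable {F V : Type}

theorem forall₂_map_map {α β : Type} (r : β → β → Prop) (g₁ g₂ : α → β) :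
    ∀ l : List α, (∀ a ∈ l, r (g₁ a) (g₂ a)) → List.Forall₂ r (l.map g₁) (l.map g₂) := by
  intro l h
  induction l with
  | nil => exact .nil
  | cons a l ih => exact .cons (h a (by simp)) (ih fun a ha => h a (by simp [ha]))

theorem app_ge (O : ReductionOrdering F V) (f : F) :
    ∀ (ts us pre : List (Trm F V)),
      List.Forall₂ (fun a b => a = b ∨ O.gt a b) ts us →
      Trm.app f (pre ++ ts) = Trm.app f (pre ++ us) ∨
        O.gt (Trm.app f (pre ++ ts)) (Trm.app f (pre ++ us)) := by
  intro ts us pre h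
  induction h generalizing pre with
  | nil => exact Or.inl rfl
  | @cons a b ts us hab hrest ih =>
    have hre : ∀ (x : Trm F V) (l : List (Trm F V)), pre ++ x :: l = (pre ++ [x]) ++ l := by
      intro x l; simp
    rcases hab with rfl | hgt
    · rw [hre a ts, hre a us]; exact ih (pre ++ [a])
    · have h1 : O.gt (Trm.app f (pre ++ a :: ts)) (Trm.app f (pre ++ b :: ts)) :=
        O.compat_ctx f pre ts hgt
      rcases ih (pre ++ [b]) with heq | hgt2
      · right
        rw [hre b us, ← heq, ← hre b ts]
        exact h1
      · right
        rw [hre b ts] at h1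
        rw [hre b us]
        exact O.trans h1 hgt2

variable {O : ReductionOrdering F V} {R₁ R₂ : Set (Trm F V × Trm F V)} {K : Trm F V → Prop}

theorem ConeHyps.nmElt_eq (hc : ConeHyps O R₁ R₂ K) (θ : V → Trm F V) (t : Trm F V) (m : ℕ)
    (hK : K (t.subst θ)) :
    nmElt R₂ θ (t, m) = nmElt R₁ θ (t, m) ∧
      ∀ p ∈ nmElt R₁ θ (t, m), t.subst θ = p.1 ∨ O.gt (t.subst θ) p.1 := by
  have hgt₁ : ∀ p ∈ R₁, O.gt p.1 p.2 := fun p hp => (hc.hOK p (hc.hsub hp)).2.2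
  have hOK₁ : RulesOK O R₁ := fun p hp => hc.hOK p (hc.hsub hp)
  cases t with
  | var x =>
    rw [Trm.subst_var] at hK
    constructor
    · simp only [nmElt]; exact hc.rm_eq (θ x) hK m
    · simp only [nmElt, Trm.subst_var]
      exact RM_elem O hOK₁ (rm_spec O hgt₁ (θ x) m) (hc.hKg _ hK)
  | app f ts =>
    have hKa : ∀ a ∈ ts, K (a.subst θ) := by
      intro a ha
      obtain ⟨l, r, hlr⟩ := List.append_of_mem (List.mem_map_of_mem (f := Trm.subst θ) ha)
      rw [Trm.subst_app, hlr] at hK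
      exact hc.hKarg f l _ r hK
    have hmap : (ts.map fun a => nf R₂ (a.subst θ)) = ts.map fun a => nf R₁ (a.subst θ) :=
      List.map_congr_left fun a ha => hc.nf_eq _ (hKa a ha)
    have hWg : (Trm.app f (ts.map fun a => nf R₁ (a.subst θ))).IsGround := by
      refine Trm.IsGround.app ?_
      intro x hx
      obtain ⟨a, ha, rfl⟩ := List.mem_map.1 hx
      exact nf_ground O hOK₁ (hc.hKg _ (hKa a ha))
    have hge : (Trm.app f ts).subst θ = Trm.app f (ts.map fun a => nf R₁ (a.subst θ)) ∨
        O.gt ((Trm.app f ts).subst θ) (Trm.app f (ts.map fun a => nf R₁ (a.subst θ))) := by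
      rw [Trm.subst_app]
      have h2 : List.Forall₂ (fun a b => a = b ∨ O.gt a b) (ts.map (Trm.subst θ))
          (ts.map fun a => nf R₁ (a.subst θ)) :=
        forall₂_map_map _ _ _ ts (fun a _ => nf_ge O hgt₁ (a.subst θ))
      simpa using app_ge O f _ _ [] h2
    have hKW : K (Trm.app f (ts.map fun a => nf R₁ (a.subst θ))) := by
      rcases hge with heq | hgt
      · exact heq ▸ hK
      · exact hc.hKdown _ _ hK hWg hgt
    constructor
    · simp only [nmElt]; rw [hmap]; exact hc.rm_eq _ hKW m
    · simp only [nmElt]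
      intro p hp
      have hle := RM_elem O hOK₁ (rm_spec O hgt₁ _ m) hWg p hp
      rcases hge with heq | hgt1
      · rw [heq]; exact hle
      · rcases hle with heq2 | hgt2
        · exact Or.inr (heq2 ▸ hgt1)
        · exact Or.inr (O.trans hgt1 hgt2)

end AuxNmElt
section AuxMult
variable {α : Type} {r : α → α → Prop}

theorem multGT_add_right {M N Kk : Multiset α} (h : MultGT r M N) :
    MultGT r (M + Kk) (N + Kk) := by
  obtain ⟨X, Y, Z, hM, hN, hX, hd⟩ := h
  exact ⟨X, Y, Z + Kk, by rw [hM, add_right_comm], by rw [hN, add_right_comm], hX, hd⟩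

theorem multGT_cancel_cons (htr : Transitive r) (hirr : ∀ a, ¬ r a a) {M N : Multiset α}
    {a : α} (h : MultGT r (a ::ₘ M) (a ::ₘ N)) : MultGT r M N := by
  classical
  obtain ⟨X, Y, Z, hM, hN, hX, hd⟩ := h
  by_cases hZ : a ∈ Z
  · refine ⟨X, Y, Z.erase a, ?_, ?_, hX, hd⟩
    · have := congrArg (fun M => Multiset.erase M a) hM
      simpa [Multiset.erase_cons_head, Multiset.erase_add_left_pos _ hZ] using this
    · have := congrArg (fun M => Multiset.erase M a) hN
      simpa [Multiset.erase_cons_head, Multiset.erase_add_left_pos _ hZ] using this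
  · have haX : a ∈ X := by
      have : a ∈ Z + X := hM ▸ Multiset.mem_cons_self a M
      exact (Multiset.mem_add.1 this).resolve_left hZ
    have haY : a ∈ Y := by
      have : a ∈ Z + Y := hN ▸ Multiset.mem_cons_self a N
      exact (Multiset.mem_add.1 this).resolve_left hZ
    obtain ⟨x₂, hx₂X, hx₂a⟩ := hd a haY
    have hx₂ne : x₂ ≠ a := fun h => hirr a (h ▸ hx₂a)
    have hx₂X' : x₂ ∈ X.erase a := (Multiset.mem_erase_of_ne hx₂ne).2 hx₂X
    refine ⟨X.erase a, Y.erase a, Z, ?_, ?_, ?_, ?_⟩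
    · have := congrArg (fun M => Multiset.erase M a) hM
      simpa [Multiset.erase_cons_head, Multiset.erase_add_right_pos _ haX] using this
    · have := congrArg (fun M => Multiset.erase M a) hN
      simpa [Multiset.erase_cons_head, Multiset.erase_add_right_pos _ haY] using this
    · intro h0; rw [h0] at hx₂X'; simp at hx₂X'
    · intro y hy
      have hyY : y ∈ Y := Multiset.mem_of_mem_erase hy
      obtain ⟨x, hxX, hxy⟩ := hd y hyY
      by_cases hxa : x = a
      · exact ⟨x₂, hx₂X', htr hx₂a (hxa ▸ hxy)⟩
      · exact ⟨x, (Multiset.mem_erase_of_ne hxa).2 hxX, hxy⟩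

theorem multGT_cancel (htr : Transitive r) (hirr : ∀ a, ¬ r a a) (Kk : Multiset α) :
    ∀ {M N : Multiset α}, MultGT r (M + Kk) (N + Kk) → MultGT r M N := by
  induction Kk using Multiset.induction_on with
  | empty => intro M N h; simpa using h
  | cons a Kk ih =>
    intro M N h
    rw [Multiset.add_cons, Multiset.add_cons] at h
    exact ih (multGT_cancel_cons htr hirr h)

theorem multGT_add_iff (htr : Transitive r) (hirr : ∀ a, ¬ r a a) (Kk : Multiset α)
    {M N : Multiset α} : MultGT r (M + Kk) (N + Kk) ↔ MultGT r M N :=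
  ⟨multGT_cancel htr hirr Kk, multGT_add_right⟩

theorem cmp_lemma (htr : Transitive r) (hirr : ∀ a, ¬ r a a)
    (σ : α) (A₁ A₂ D : Multiset α) (c₁ c₂ : ℕ)
    (hA₁ : ∀ p ∈ A₁, r σ p) (hA₂ : ∀ p ∈ A₂, r σ p) (hD : ∀ p ∈ D, r σ p) (Q : Prop) :
    (MultGT r (A₁ + c₁ • {σ}) (A₂ + c₂ • {σ}) ∨ (A₁ + c₁ • {σ} = A₂ + c₂ • {σ} ∧ Q)) ↔
      (MultGT r (A₁ + c₁ • D + c₁ • {σ}) (A₂ + c₂ • D + c₂ • {σ}) ∨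
        (A₁ + c₁ • D + c₁ • {σ} = A₂ + c₂ • D + c₂ • {σ} ∧ Q)) := by
  classical
  have hcount : ∀ (A : Multiset α) (c : ℕ), (∀ p ∈ A, r σ p) →
      Multiset.count σ (A + c • ({σ} : Multiset α)) = c := by
    intro A c hA
    rw [Multiset.count_add, Multiset.nsmul_singleton, Multiset.count_replicate_self]
    have h0 : Multiset.count σ A = 0 := by
      rw [Multiset.count_eq_zero]; intro hmem; exact hirr σ (hA σ hmem)
    omega
  have hDb : ∀ (A : Multiset α) (c : ℕ), (∀ p ∈ A, r σ p) → ∀ p ∈ A + c • D, r σ p := by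
    intro A c hA p hp
    rcases Multiset.mem_add.1 hp with hp | hp
    · exact hA p hp
    · exact hD p (Multiset.mem_nsmul.1 hp).2
  have hgt_of_lt : ∀ (B₁ B₂ : Multiset α) (d₁ d₂ : ℕ), (∀ p ∈ B₂, r σ p) → d₂ < d₁ →
      MultGT r (B₁ + d₁ • ({σ} : Multiset α)) (B₂ + d₂ • {σ}) := by
    intro B₁ B₂ d₁ d₂ hB₂ hlt
    have hσX : σ ∈ B₁ + (d₁ - d₂) • ({σ} : Multiset α) := by
      rw [Multiset.mem_add, Multiset.mem_nsmul]
      exact Or.inr ⟨by omega, by simp⟩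
    refine ⟨B₁ + (d₁ - d₂) • ({σ} : Multiset α), B₂, d₂ • {σ}, ?_, by rw [add_comm], ?_, ?_⟩
    · simp only [Multiset.nsmul_singleton]
      have hrep : Multiset.replicate d₁ σ =
          Multiset.replicate d₂ σ + Multiset.replicate (d₁ - d₂) σ := by
        rw [← Multiset.replicate_add]; congr 1; omega
      rw [hrep]; abel
    · intro h0; rw [h0] at hσX; simp at hσX
    · intro y hy; exact ⟨σ, hσX, hB₂ y hy⟩
  have hnotgt : ∀ (B₁ B₂ : Multiset α) (d₁ d₂ : ℕ), (∀ p ∈ B₁, r σ p) → d₁ < d₂ →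
      ¬ MultGT r (B₁ + d₁ • ({σ} : Multiset α)) (B₂ + d₂ • {σ}) := by
    rintro B₁ B₂ d₁ d₂ hB₁ hlt ⟨X, Y, Z, hM, hN, hX, hd⟩
    have hcM : Multiset.count σ (Z + X) = d₁ := by rw [← hM]; exact hcount _ _ hB₁
    have hcZ : Multiset.count σ Z ≤ d₁ := by
      rw [Multiset.count_add] at hcM; omega
    have hσY : σ ∈ Y := by
      rw [← Multiset.count_pos]
      have hcN : d₂ ≤ Multiset.count σ (Z + Y) := by
        rw [← hN, Multiset.count_add, Multiset.nsmul_singleton,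
          Multiset.count_replicate_self]
        omega
      rw [Multiset.count_add] at hcN
      omega
    obtain ⟨x, hxX, hxσ⟩ := hd σ hσY
    have hxM : x ∈ B₁ + d₁ • ({σ} : Multiset α) := by
      rw [hM, Multiset.mem_add]; exact Or.inr hxX
    rcases Multiset.mem_add.1 hxM with hx | hx
    · exact hirr σ (htr (hB₁ x hx) hxσ)
    · rw [Multiset.nsmul_singleton] at hx
      exact hirr σ ((Multiset.eq_of_mem_replicate hx) ▸ hxσ)
  have hne : ∀ (B₁ B₂ : Multiset α) (d₁ d₂ : ℕ), (∀ p ∈ B₁, r σ p) → (∀ p ∈ B₂, r σ p) →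
      d₁ ≠ d₂ → (B₁ + d₁ • ({σ} : Multiset α)) ≠ (B₂ + d₂ • {σ}) := by
    intro B₁ B₂ d₁ d₂ hB₁ hB₂ hd12 heq
    apply hd12
    rw [← hcount B₁ d₁ hB₁, ← hcount B₂ d₂ hB₂, heq]
  rcases lt_trichotomy c₁ c₂ with h | h | h
  · constructor <;> rintro (hgt | ⟨heq, hQ⟩)
    · exact absurd hgt (hnotgt _ _ _ _ hA₁ h)
    · exact absurd heq (hne _ _ _ _ hA₁ hA₂ h.ne)
    · exact absurd hgt (hnotgt _ _ _ _ (hDb A₁ c₁ hA₁) h)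
    · exact absurd heq (hne _ _ _ _ (hDb A₁ c₁ hA₁) (hDb A₂ c₂ hA₂) h.ne)
  · subst h
    have e1 := multGT_add_iff htr hirr (c₁ • ({σ} : Multiset α)) (M := A₁) (N := A₂)
    have e2 := multGT_add_iff htr hirr (c₁ • D + c₁ • ({σ} : Multiset α)) (M := A₁) (N := A₂)
    rw [← add_assoc, ← add_assoc] at e2
    have eq1 : (A₁ + c₁ • ({σ} : Multiset α) = A₂ + c₁ • {σ}) ↔ A₁ = A₂ :=
      ⟨fun h => add_right_cancel h, fun h => by rw [h]⟩
    have eq2 : (A₁ + c₁ • D + c₁ • ({σ} : Multiset α) = A₂ + c₁ • D + c₁ • {σ}) ↔ A₁ = A₂ := by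
      constructor
      · intro h; exact add_right_cancel (add_right_cancel h)
      · intro h; rw [h]
    rw [e1, e2, eq1, eq2]
  · constructor <;> intro _
    · exact Or.inl (hgt_of_lt _ _ _ _ (hDb A₂ c₂ hA₂) h)
    · exact Or.inl (hgt_of_lt _ _ _ _ hA₂ h)

end AuxMult
section AuxClause
variable {F V : Type}

theorem lexGT_trans (O : ReductionOrdering F V) : Transitive (lexGT O) := by
  rintro a b c (h1 | ⟨e1, l1⟩) (h2 | ⟨e2, l2⟩)
  · exact Or.inl (O.trans h1 h2)
  · exact Or.inl (e2 ▸ h1)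
  · exact Or.inl (e1 ▸ h2)
  · exact Or.inr ⟨e1.trans e2, l2.trans l1⟩

theorem lexGT_irrefl (O : ReductionOrdering F V) : ∀ a, ¬ lexGT O a a := by
  rintro a (h | ⟨_, h⟩)
  · exact O_gt_irrefl O a.1 h
  · exact Nat.lt_irrefl _ h

theorem mem_ssN_iff {C : Clause F V} {w : Trm F V} :
    w ∈ ssN C ↔ ∃ L ∈ C, w ∈ L.negSubs := by
  simp [ssN, Finset.mem_sup, Multiset.mem_toFinset]

theorem mem_ssPp_iff {C : Clause F V} {w : Trm F V} :
    w ∈ ssPp C ↔ ∃ L ∈ C, w ∈ L.posPSubs := by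
  simp [ssPp, Finset.mem_sup, Multiset.mem_toFinset]

theorem mem_tsN_iff {C : Clause F V} {w : Trm F V} :
    w ∈ tsN C ↔ ∃ L ∈ C, w ∈ L.negTops := by
  simp [tsN, Finset.mem_sup, Multiset.mem_toFinset]

theorem mem_tsP_iff {C : Clause F V} {w : Trm F V} :
    w ∈ tsP C ↔ ∃ L ∈ C, w ∈ L.posTops := by
  simp [tsP, Finset.mem_sup, Multiset.mem_toFinset]

theorem mem_allSub_iff {C : Clause F V} {w : Trm F V} :
    w ∈ allSub C ↔ ∃ L ∈ C, w ∈ L.allSubs := by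
  simp [allSub, Finset.mem_sup, Multiset.mem_toFinset]

@[simp] theorem Lit.subst_pos {θ : V → Trm F V} {a b : Trm F V} :
    (Lit.pos a b).subst θ = Lit.pos (a.subst θ) (b.subst θ) := rfl

@[simp] theorem Lit.subst_neg {θ : V → Trm F V} {a b : Trm F V} :
    (Lit.neg a b).subst θ = Lit.neg (a.subst θ) (b.subst θ) := rfl

theorem Lit.negSubs_subst {L : Lit F V} {θ : V → Trm F V} {w : Trm F V}
    (h : w ∈ L.negSubs) : w.subst θ ∈ (L.subst θ).negSubs := by
  cases L with
  | pos a b => simp [Lit.negSubs] at h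
  | neg a b =>
    simp only [Lit.negSubs, Lit.subst_neg, Finset.mem_union] at h ⊢
    rcases h with h | h
    · exact Or.inl (Trm.subst_mem_subterms θ h)
    · exact Or.inr (Trm.subst_mem_subterms θ h)

theorem Lit.posPSubs_subst {L : Lit F V} {θ : V → Trm F V} {w : Trm F V}
    (h : w ∈ L.posPSubs) : w.subst θ ∈ (L.subst θ).posPSubs := by
  cases L with
  | neg a b => simp [Lit.posPSubs] at h
  | pos a b =>
    simp only [Lit.posPSubs, Lit.subst_pos, Finset.mem_union] at h ⊢
    rcases h with h | h
    · exact Or.inl (Trm.subst_mem_psubterms θ h)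
    · exact Or.inr (Trm.subst_mem_psubterms θ h)

theorem Lit.negTops_subst {L : Lit F V} {θ : V → Trm F V} {w : Trm F V}
    (h : w ∈ L.negTops) : w.subst θ ∈ (L.subst θ).negTops := by
  cases L with
  | pos a b => simp [Lit.negTops] at h
  | neg a b =>
    simp only [Lit.negTops, Lit.subst_neg, Finset.mem_insert, Finset.mem_singleton] at h ⊢
    rcases h with rfl | rfl
    · exact Or.inl rfl
    · exact Or.inr rfl

theorem Lit.posTops_subst {L : Lit F V} {θ : V → Trm F V} {w : Trm F V}
    (h : w ∈ L.posTops) : w.subst θ ∈ (L.subst θ).posTops := by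
  cases L with
  | neg a b => simp [Lit.posTops] at h
  | pos a b =>
    simp only [Lit.posTops, Lit.subst_pos, Finset.mem_insert, Finset.mem_singleton] at h ⊢
    rcases h with rfl | rfl
    · exact Or.inl rfl
    · exact Or.inr rfl

theorem ssN_subst {C : Clause F V} {θ : V → Trm F V} {w : Trm F V} (h : w ∈ ssN C) :
    w.subst θ ∈ ssN (Clause.subst θ C) := by
  obtain ⟨L, hL, hw⟩ := mem_ssN_iff.1 h
  exact mem_ssN_iff.2 ⟨L.subst θ, Multiset.mem_map_of_mem _ hL, Lit.negSubs_subst hw⟩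

theorem ssPp_subst {C : Clause F V} {θ : V → Trm F V} {w : Trm F V} (h : w ∈ ssPp C) :
    w.subst θ ∈ ssPp (Clause.subst θ C) := by
  obtain ⟨L, hL, hw⟩ := mem_ssPp_iff.1 h
  exact mem_ssPp_iff.2 ⟨L.subst θ, Multiset.mem_map_of_mem _ hL, Lit.posPSubs_subst hw⟩

theorem tsN_subst {C : Clause F V} {θ : V → Trm F V} {w : Trm F V} (h : w ∈ tsN C) :
    w.subst θ ∈ tsN (Clause.subst θ C) := by
  obtain ⟨L, hL, hw⟩ := mem_tsN_iff.1 h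
  exact mem_tsN_iff.2 ⟨L.subst θ, Multiset.mem_map_of_mem _ hL, Lit.negTops_subst hw⟩

theorem tsP_subst {C : Clause F V} {θ : V → Trm F V} {w : Trm F V} (h : w ∈ tsP C) :
    w.subst θ ∈ tsP (Clause.subst θ C) := by
  obtain ⟨L, hL, hw⟩ := mem_tsP_iff.1 h
  exact mem_tsP_iff.2 ⟨L.subst θ, Multiset.mem_map_of_mem _ hL, Lit.posTops_subst hw⟩

theorem tsN_subset_ssN {C : Clause F V} {w : Trm F V} (h : w ∈ tsN C) : w ∈ ssN C := by
  obtain ⟨L, hL, hw⟩ := mem_tsN_iff.1 h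
  refine mem_ssN_iff.2 ⟨L, hL, ?_⟩
  cases L with
  | pos a b => simp [Lit.negTops] at hw
  | neg a b =>
    simp only [Lit.negTops, Finset.mem_insert, Finset.mem_singleton] at hw
    simp only [Lit.negSubs, Finset.mem_union]
    rcases hw with rfl | rfl
    · exact Or.inl (Trm.self_mem_subterms _)
    · exact Or.inr (Trm.self_mem_subterms _)

theorem ssN_subset_allSub {C : Clause F V} {w : Trm F V} (h : w ∈ ssN C) : w ∈ allSub C := by
  obtain ⟨L, hL, hw⟩ := mem_ssN_iff.1 h
  refine mem_allSub_iff.2 ⟨L, hL, ?_⟩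
  cases L with
  | pos a b => simp [Lit.negSubs] at hw
  | neg a b => exact hw

theorem ssPp_subset_allSub {C : Clause F V} {w : Trm F V} (h : w ∈ ssPp C) : w ∈ allSub C := by
  obtain ⟨L, hL, hw⟩ := mem_ssPp_iff.1 h
  refine mem_allSub_iff.2 ⟨L, hL, ?_⟩
  cases L with
  | neg a b => simp [Lit.posPSubs] at hw
  | pos a b =>
    simp only [Lit.posPSubs, Finset.mem_union] at hw
    simp only [Lit.allSubs, Finset.mem_union]
    rcases hw with h | h
    · exact Or.inl (Trm.psubterms_subset_subterms h)
    · exact Or.inr (Trm.psubterms_subset_subterms h)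

theorem tsP_subset_allSub {C : Clause F V} {w : Trm F V} (h : w ∈ tsP C) : w ∈ allSub C := by
  obtain ⟨L, hL, hw⟩ := mem_tsP_iff.1 h
  refine mem_allSub_iff.2 ⟨L, hL, ?_⟩
  cases L with
  | neg a b => simp [Lit.posTops] at hw
  | pos a b =>
    simp only [Lit.posTops, Finset.mem_insert, Finset.mem_singleton] at hw
    simp only [Lit.allSubs, Finset.mem_union]
    rcases hw with rfl | rfl
    · exact Or.inl (Trm.self_mem_subterms _)
    · exact Or.inr (Trm.self_mem_subterms _)

theorem tsN_subset_allSub {C : Clause F V} {w : Trm F V} (h : w ∈ tsN C) : w ∈ allSub C :=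
  ssN_subset_allSub (tsN_subset_ssN h)

theorem allSub_ground {D : Clause F V} (hD : Clause.IsGround D) {w : Trm F V}
    (h : w ∈ allSub D) : w.IsGround := by
  obtain ⟨L, hL, hw⟩ := mem_allSub_iff.1 h
  have hLg : L.IsGround := hD L hL
  cases L with
  | pos a b =>
    simp only [Lit.allSubs, Finset.mem_union] at hw
    rcases hw with h | h
    · exact Trm.isGround_of_mem_subterms hLg.1 h
    · exact Trm.isGround_of_mem_subterms hLg.2 h
  | neg a b =>
    simp only [Lit.allSubs, Finset.mem_union] at hw
    rcases hw with h | h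
    · exact Trm.isGround_of_mem_subterms hLg.1 h
    · exact Trm.isGround_of_mem_subterms hLg.2 h

theorem mem_lss_iff {C : Clause F V} {t : Trm F V} {m : ℕ} :
    (t, m) ∈ lss C ↔ (m = 2 ∧ t ∈ ssN C) ∨ (m = 1 ∧ t ∈ ssPp C ∧ t ∉ ssN C) ∨
      (m = 0 ∧ t ∈ tsP C ∧ t ∉ ssPp C ∧ t ∉ ssN C) := by
  simp only [lss, Finset.mem_union, Finset.mem_image, Finset.mem_sdiff, Prod.mk.injEq]
  constructor
  · rintro ((⟨a, ha, rfl, rfl⟩ | ⟨a, ⟨ha1, ha2⟩, rfl, rfl⟩) | ⟨a, ⟨ha1, ha2⟩, rfl, rfl⟩)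
    · exact Or.inl ⟨rfl, ha⟩
    · exact Or.inr (Or.inl ⟨rfl, ha1, ha2⟩)
    · push_neg at ha2
      exact Or.inr (Or.inr ⟨rfl, ha1, ha2.1, ha2.2⟩)
  · rintro (⟨rfl, h⟩ | ⟨rfl, h1, h2⟩ | ⟨rfl, h1, h2, h3⟩)
    · exact Or.inl (Or.inl ⟨t, h, rfl, rfl⟩)
    · exact Or.inl (Or.inr ⟨t, ⟨h1, h2⟩, rfl, rfl⟩)
    · exact Or.inr ⟨t, ⟨h1, by push_neg; exact ⟨h2, h3⟩⟩, rfl, rfl⟩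

theorem mem_lts_iff {C : Clause F V} {t : Trm F V} {m : ℕ} :
    (t, m) ∈ lts C ↔ (m = 2 ∧ t ∈ tsN C) ∨ (m = 0 ∧ t ∈ tsP C ∧ t ∉ tsN C) := by
  simp only [lts, Finset.mem_union, Finset.mem_image, Finset.mem_sdiff, Prod.mk.injEq]
  constructor
  · rintro (⟨a, ha, rfl, rfl⟩ | ⟨a, ⟨ha1, ha2⟩, rfl, rfl⟩)
    · exact Or.inl ⟨rfl, ha⟩
    · exact Or.inr ⟨rfl, ha1, ha2⟩
  · rintro (⟨rfl, h⟩ | ⟨rfl, h1, h2⟩)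
    · exact Or.inl ⟨t, h, rfl, rfl⟩
    · exact Or.inr ⟨t, ⟨h1, h2⟩, rfl, rfl⟩

theorem cloGT_shape (O : ReductionOrdering F V) (T : TieBreak F V)
    (R : Set (Trm F V × Trm F V)) (c d : Closure F V) :
    cloGT O T R c d ↔ (MultGT (lexGT O) (nm R c.1 c.2) (nm R d.1 d.2) ∨
      (nm R c.1 c.2 = nm R d.1 d.2 ∧
        (clauseGT O c.inst d.inst ∨ (c.inst = d.inst ∧ T.gt c d)))) := by
  unfold cloGT
  tauto

end AuxClause
section AuxInv
variable {F V : Type}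

theorem rewAt_false_inv {R : Set (Trm F V × Trm F V)} {t t' u : Trm F V}
    (h : RewAt R t t' u false) :
    ∃ f l r w w' b, t = Trm.app f (l ++ w :: r) ∧ t' = Trm.app f (l ++ w' :: r) ∧
      RewAt R w w' u b := by
  cases h with
  | congr hin => exact ⟨_, _, _, _, _, _, rfl, rfl, hin⟩

theorem rewAt_true_inv {R : Set (Trm F V × Trm F V)} {t t' u : Trm F V}
    (h : RewAt R t t' u true) : t = u ∧ (t, t') ∈ R := by
  cases h with
  | root h => exact ⟨rfl, h⟩

theorem RM_zero_inv {R : Set (Trm F V × Trm F V)} {w : Trm F V} {S : Multiset (Trm F V × ℕ)}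
    (h : RM R w 0 S) :
    (Irred R w ∧ S = 0) ∨
      (∃ u w' S', RewAt R w w' u true ∧ S = (u, 0) ::ₘ S' ∧ RM R w' 0 S') ∨
      (∃ u w' S', RewAt R w w' u false ∧ S = (u, 1) ::ₘ S' ∧ RM R w' 0 S') := by
  cases h with
  | irred hI => exact Or.inl ⟨hI, rfl⟩
  | @step_top t t' u b m S hrw hb hS =>
    have hb' : b = true := by
      rcases hb with h | h
      · exact h
      · omega
    exact Or.inr (Or.inl ⟨_, _, _, hb' ▸ hrw, rfl, hS⟩)
  | step_deep hrw hS => exact Or.inr (Or.inr ⟨_, _, _, hrw, rfl, hS⟩)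

theorem cloGT_shape' (O : ReductionOrdering F V) (T : TieBreak F V)
    (R : Set (Trm F V × Trm F V)) (C D : Clause F V) (θ : V → Trm F V) :
    cloGT O T R (C, θ) (D, θ) ↔ (MultGT (lexGT O) (nm R C θ) (nm R D θ) ∨
      (nm R C θ = nm R D θ ∧
        (clauseGT O (Closure.inst (C, θ)) (Closure.inst (D, θ)) ∨
          (Closure.inst (C, θ) = Closure.inst (D, θ) ∧ T.gt (C, θ) (D, θ))))) :=
  cloGT_shape O T R (C, θ) (D, θ)

end AuxInv
/-- Lemma 5: if the ground term `s` is a strictly maximal term of both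
`C₁θ` and `C₂θ` and occurs only (at the top of) positive literals of both, then
`(C₁·θ) ≫_{R_s} (C₂·θ)` iff `(C₁·θ) ≫_{R_*} (C₂·θ)`. -/
theorem orderings_agree {F V : Type} (O : ReductionOrdering F V) (T : TieBreak F V)
    (N : Set (Closure F V))
    (E : Trm F V → Set (Trm F V × Trm F V)) (hE : IsCandidate O T N E)
    (s : Trm F V) (hs : s.IsGround)
    (C₁ C₂ : Clause F V) (θ : V → Trm F V)
    (hg1 : Closure.IsGround (C₁, θ)) (hg2 : Closure.IsGround (C₂, θ))
    (h1 : StrictMaxTermPos O (Clause.subst θ C₁) s)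
    (h2 : StrictMaxTermPos O (Clause.subst θ C₂) s) :
    cloGT O T (Rbelow O E s) (C₁, θ) (C₂, θ) ↔ cloGT O T (Rstar E) (C₁, θ) (C₂, θ) := by
  classical
  obtain ⟨hmax1, hsN1, hsP1, hsT1⟩ := h1
  obtain ⟨hmax2, hsN2, hsP2, hsT2⟩ := h2
  set R₁ := Rbelow O E s with hR1def
  set R₂ := Rstar E with hR2def
  have memE : ∀ {t : Trm F V} {p : Trm F V × Trm F V}, p ∈ E t →
      p.1 = t ∧ p.1.IsGround ∧ p.2.IsGround ∧ O.gt p.1 p.2 := by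
    intro t p hp
    rcases hE t with ⟨C', u, u', θ', hprod, hEt⟩ | ⟨_, hEt⟩
    · rw [hEt] at hp
      obtain rfl : p = (t, u'.subst θ') := hp
      obtain ⟨huθ, hpc, _⟩ := hprod
      have hgr : (Lit.subst θ' (Lit.pos u u')).IsGround :=
        hpc.2.1 _ (Multiset.mem_map_of_mem _
          (by simp : Lit.pos u u' ∈ C' + {Lit.pos u u'}))
      rw [Lit.subst_pos] at hgr
      have hgt := hpc.2.2.2.2.2
      rw [huθ] at hgt
      have hg1' := hgr.1
      rw [huθ] at hg1'
      exact ⟨rfl, hg1', hgr.2, hgt⟩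
    · rw [hEt] at hp
      exact absurd hp (Set.notMem_empty p)
  have hOK₂ : RulesOK O R₂ := by
    rintro p ⟨t, ht⟩
    exact (memE ht).2
  have hgt₂ : ∀ p ∈ R₂, O.gt p.1 p.2 := fun p hp => (hOK₂ p hp).2.2
  have hsub : R₁ ⊆ R₂ := by
    rintro p ⟨t, _, h⟩
    exact ⟨t, h⟩
  have hOK₁ : RulesOK O R₁ := fun p hp => hOK₂ p (hsub hp)
  have hgt₁ : ∀ p ∈ R₁, O.gt p.1 p.2 := fun p hp => (hOK₁ p hp).2.2
  have hmemR1 : ∀ p ∈ R₂, O.gt s p.1 → p ∈ R₁ := by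
    rintro p ⟨t, ht⟩ hgt
    refine ⟨t, ?_, ht⟩
    rw [← (memE ht).1]
    exact hgt
  have hCg1 : Clause.IsGround (Clause.subst θ C₁) := hg1
  have hCg2 : Clause.IsGround (Clause.subst θ C₂) := hg2
  have helt : ∀ (C : Clause F V), Clause.IsGround (Clause.subst θ C) →
      (∀ w ∈ allSub (Clause.subst θ C), w = s ∨ O.gt s w) →
      ∀ t : Trm F V, (t ∈ ssN C ∨ t ∈ ssPp C ∨ t ∈ tsP C ∨ t ∈ tsN C) →
      (t.subst θ).IsGround ∧ (t.subst θ = s ∨ O.gt s (t.subst θ)) := by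
    intro C hCg hCmax t ht
    have hmem : t.subst θ ∈ allSub (Clause.subst θ C) := by
      rcases ht with h | h | h | h
      · exact ssN_subset_allSub (ssN_subst h)
      · exact ssPp_subset_allSub (ssPp_subst h)
      · exact tsP_subset_allSub (tsP_subst h)
      · exact tsN_subset_allSub (tsN_subst h)
    exact ⟨allSub_ground hCg hmem, hCmax _ hmem⟩
  have hlss4 : ∀ (C : Clause F V) (t : Trm F V) (m : ℕ), (t, m) ∈ lss C →
      t ∈ ssN C ∨ t ∈ ssPp C ∨ t ∈ tsP C ∨ t ∈ tsN C := by
    intro C t m he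
    rcases mem_lss_iff.1 he with ⟨_, h⟩ | ⟨_, h, _⟩ | ⟨_, h, _, _⟩
    · exact Or.inl h
    · exact Or.inr (Or.inl h)
    · exact Or.inr (Or.inr (Or.inl h))
  have hlts4 : ∀ (C : Clause F V) (t : Trm F V) (m : ℕ), (t, m) ∈ lts C →
      t ∈ ssN C ∨ t ∈ ssPp C ∨ t ∈ tsP C ∨ t ∈ tsN C := by
    intro C t m he
    rcases mem_lts_iff.1 he with ⟨_, h⟩ | ⟨_, h, _⟩
    · exact Or.inr (Or.inr (Or.inr h))
    · exact Or.inr (Or.inr (Or.inl h))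
  rcases hE s with ⟨C', u, u', θ', hprod, hEs⟩ | ⟨-, hEs⟩
  · -- Case 2 : E s = {(s, s')}
    set s' := u'.subst θ' with hs'def
    have hus : u.subst θ' = s := hprod.1
    have hpc := hprod.2.1
    have hIrr : Irred R₁ s := by
      have h := hpc.2.2.2.1
      rwa [hus] at h
    have hss' : O.gt s s' := by
      have h := hpc.2.2.2.2.2
      rwa [hus] at h
    have hs'g : s'.IsGround := by
      have hgr : (Lit.subst θ' (Lit.pos u u')).IsGround :=
        hpc.2.1 _ (Multiset.mem_map_of_mem _
          (by simp : Lit.pos u u' ∈ C' + {Lit.pos u u'}))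
      rw [Lit.subst_pos] at hgr
      exact hgr.2
    have hrule : (s, s') ∈ R₂ := ⟨s, by rw [hEs]; rfl⟩
    have hstep_s : Step R₂ s s' := ⟨s, true, .root hrule⟩
    set K : Trm F V → Prop := fun w => w.IsGround ∧ O.gt s w with hKdef
    have hc : ConeHyps O R₁ R₂ K := by
      refine ⟨hsub, hOK₂, fun w hw => hw.1, ?_, ?_, ?_⟩
      · rintro p hp w hw rfl
        exact hmemR1 p hp hw.2
      · rintro w w' ⟨hwg, hww⟩ hw'g hgt
        exact ⟨hw'g, O.trans hww hgt⟩
      · rintro f l x r ⟨hg, hle⟩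
        exact ⟨Trm.isGround_app_iff.1 hg x (by simp),
          O.trans hle (gt_app_arg O f l r x hg)⟩
    have hnodeep : ∀ (t' v : Trm F V), ¬ RewAt R₂ s t' v false := by
      intro t' v h
      obtain ⟨f, l, r, w, w', b, heq, _, hin⟩ := rewAt_false_inv h
      have hKw : K w := by
        constructor
        · exact Trm.isGround_app_iff.1 (heq ▸ hs) w (by simp)
        · have hgtw := gt_app_arg O f l r w (heq ▸ hs)
          rw [← heq] at hgtw
          exact hgtw
      refine hIrr (Trm.app f (l ++ w' :: r)) ⟨v, false, ?_⟩
      rw [heq]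
      exact RewAt.congr ((hc.rewAt_iff hKw).1 hin)
    have hroot_char : ∀ (t' v : Trm F V), RewAt R₂ s t' v true → t' = s' := by
      intro t' v h
      obtain ⟨-, hmem⟩ := rewAt_true_inv h
      obtain ⟨t, ht⟩ := hmem
      have h1 : t = s := ((memE ht).1).symm
      rw [h1, hEs] at ht
      have h2 : ((s : Trm F V), t') = (s, s') := ht
      exact (Prod.ext_iff.1 h2).2
    have hRM_char : ∀ S, RM R₂ s 0 S → ∃ S', S = (s, 0) ::ₘ S' ∧ RM R₂ s' 0 S' := by
      intro S h
      rcases RM_zero_inv h with ⟨hI, _⟩ | ⟨v, w', S', hrw, hSeq, hS'⟩ | ⟨v, w', S', hrw, _, _⟩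
      · exact absurd hstep_s (hI s')
      · have hw' : w' = s' := hroot_char _ _ hrw
        have hv : s = v := (rewAt_true_inv hrw).1
        exact ⟨S', by rw [hSeq, ← hv], by rw [← hw']; exact hS'⟩
      · exact absurd hrw (hnodeep _ _)
    have hδ₁ : rm R₁ s 0 = 0 := rm_of_irred hIrr
    have hε₁ : nf R₁ s = s := nf_of_irred hIrr
    obtain ⟨S₀, hS₀eq, hS₀RM⟩ := hRM_char _ (rm_spec O hgt₂ s 0)
    have hS₀b : ∀ p ∈ S₀, O.gt s p.1 := by
      intro p hp
      rcases RM_elem O hOK₂ hS₀RM hs'g p hp with heq | hgt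
      · rw [← heq]; exact hss'
      · exact O.trans hss' hgt
    have hKt₀ : K (nf R₂ s) := by
      have hspec := nf_spec O hgt₂ s
      rcases hspec.1.cases_head with heq | ⟨cc, hst, hrtg⟩
      · exfalso
        have hI : Irred R₂ s := by rw [heq]; exact hspec.2
        exact hI s' hstep_s
      · have hf := step_facts O hOK₂ hst hs
        exact hc.K_rtg hrtg ⟨hf.2, hf.1⟩
    have decomp : ∀ C : Clause F V, Clause.IsGround (Clause.subst θ C) →
        (∀ w ∈ allSub (Clause.subst θ C), w = s ∨ O.gt s w) →
        s ∉ ssN (Clause.subst θ C) → s ∉ ssPp (Clause.subst θ C) →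
        ∃ A : Multiset (Trm F V × ℕ), (∀ p ∈ A, O.gt s p.1) ∧
          nm R₁ C θ = A + ((tsP C).filter fun t => t.subst θ = s).card •
            ({((s : Trm F V), (0:ℕ))} : Multiset (Trm F V × ℕ)) ∧
          nm R₂ C θ = A + ((tsP C).filter fun t => t.subst θ = s).card •
              (S₀ + {((nf R₂ s : Trm F V), (0:ℕ))}) +
            ((tsP C).filter fun t => t.subst θ = s).card •
            ({((s : Trm F V), (0:ℕ))} : Multiset (Trm F V × ℕ)) := by
      intro C hCg hCmax hsN hsP
      have hsElt : ∀ t ∈ (tsP C).filter (fun t => t.subst θ = s),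
          nmElt R₁ θ (t, 0) = 0 ∧ nmElt R₂ θ (t, 0) = (s, 0) ::ₘ S₀ ∧
            nf R₁ (t.subst θ) = s ∧ nf R₂ (t.subst θ) = nf R₂ s := by
        intro t hmemf
        obtain ⟨htsP, hts⟩ := Finset.mem_filter.1 hmemf
        cases t with
        | var x =>
          have hx : θ x = s := by rwa [Trm.subst_var] at hts
          refine ⟨?_, ?_, ?_, ?_⟩
          · show rm R₁ (θ x) 0 = 0
            rw [hx]; exact hδ₁
          · show rm R₂ (θ x) 0 = _
            rw [hx]; exact hS₀eq
          · rw [Trm.subst_var, hx]; exact hε₁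
          · rw [Trm.subst_var, hx]
        | app f ts =>
          have hts' : Trm.app f (ts.map (Trm.subst θ)) = s := by
            rwa [Trm.subst_app] at hts
          have hargIrr : ∀ a ∈ ts, Irred R₁ (a.subst θ) := by
            intro a ha x hstx
            obtain ⟨l, r, hlr⟩ := List.append_of_mem (List.mem_map_of_mem (f := Trm.subst θ) ha)
            obtain ⟨v, b, hrw⟩ := hstx
            refine hIrr (Trm.app f (l ++ x :: r)) ⟨v, false, ?_⟩
            rw [← hts', hlr]
            exact RewAt.congr hrw
          have hargK : ∀ a ∈ ts, K (a.subst θ) := by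
            intro a ha
            obtain ⟨l, r, hlr⟩ := List.append_of_mem (List.mem_map_of_mem (f := Trm.subst θ) ha)
            have hsg : (Trm.app f (l ++ a.subst θ :: r)).IsGround := by
              rw [← hlr, hts']; exact hs
            constructor
            · exact Trm.isGround_app_iff.1 hsg _ (by simp)
            · have hgta := gt_app_arg O f l r (a.subst θ) hsg
              rw [← hlr, hts'] at hgta
              exact hgta
          have hnf1 : ∀ a ∈ ts, nf R₁ (a.subst θ) = a.subst θ :=
            fun a ha => nf_of_irred (hargIrr a ha)
          have hnf2 : ∀ a ∈ ts, nf R₂ (a.subst θ) = a.subst θ :=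
            fun a ha => (hc.nf_eq _ (hargK a ha)).trans (hnf1 a ha)
          have hW₁ : (ts.map fun a => nf R₁ (a.subst θ)) = ts.map (Trm.subst θ) :=
            List.map_congr_left fun a ha => hnf1 a ha
          have hW₂ : (ts.map fun a => nf R₂ (a.subst θ)) = ts.map (Trm.subst θ) :=
            List.map_congr_left fun a ha => hnf2 a ha
          refine ⟨?_, ?_, ?_, ?_⟩
          · show rm R₁ (Trm.app f (ts.map fun a => nf R₁ (a.subst θ))) 0 = 0
            rw [hW₁, hts']; exact hδ₁
          · show rm R₂ (Trm.app f (ts.map fun a => nf R₂ (a.subst θ))) 0 = _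
            rw [hW₂, hts']; exact hS₀eq
          · rw [hts]; exact hε₁
          · rw [hts]
      have hlssf : (lss C).filter (fun e => e.1.subst θ = s) =
          ((tsP C).filter fun t => t.subst θ = s).image (fun t => (t, (0:ℕ))) := by
        ext ⟨t, m⟩
        constructor
        · intro hmem0
          obtain ⟨hmem, hts⟩ := Finset.mem_filter.1 hmem0
          rcases mem_lss_iff.1 hmem with ⟨_, h⟩ | ⟨_, h, _⟩ | ⟨rfl, h, _, _⟩
          · exfalso; apply hsN; rw [← hts]; exact ssN_subst h
          · exfalso; apply hsP; rw [← hts]; exact ssPp_subst h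
          · exact Finset.mem_image.2 ⟨t, Finset.mem_filter.2 ⟨h, hts⟩, rfl⟩
        · intro hmem0
          obtain ⟨a, haf, heq⟩ := Finset.mem_image.1 hmem0
          obtain ⟨ha, has⟩ := Finset.mem_filter.1 haf
          cases heq
          refine Finset.mem_filter.2 ⟨mem_lss_iff.2 (Or.inr (Or.inr ⟨rfl, ha, ?_, ?_⟩)), has⟩
          · intro hmem; apply hsP; rw [← has]; exact ssPp_subst hmem
          · intro hmem; apply hsN; rw [← has]; exact ssN_subst hmem
      have hltsf : (lts C).filter (fun e => e.1.subst θ = s) =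
          ((tsP C).filter fun t => t.subst θ = s).image (fun t => (t, (0:ℕ))) := by
        ext ⟨t, m⟩
        constructor
        · intro hmem0
          obtain ⟨hmem, hts⟩ := Finset.mem_filter.1 hmem0
          rcases mem_lts_iff.1 hmem with ⟨_, h⟩ | ⟨rfl, h, _⟩
          · exfalso; apply hsN; rw [← hts]; exact tsN_subset_ssN (tsN_subst h)
          · exact Finset.mem_image.2 ⟨t, Finset.mem_filter.2 ⟨h, hts⟩, rfl⟩
        · intro hmem0
          obtain ⟨a, haf, heq⟩ := Finset.mem_image.1 hmem0
          obtain ⟨ha, has⟩ := Finset.mem_filter.1 haf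
          cases heq
          refine Finset.mem_filter.2 ⟨mem_lts_iff.2 (Or.inr ⟨rfl, ha, ?_⟩), has⟩
          intro hmem; apply hsN; rw [← has]; exact tsN_subset_ssN (tsN_subst hmem)
      have hinj : ∀ x ∈ (tsP C).filter (fun t => t.subst θ = s),
          ∀ y ∈ (tsP C).filter (fun t => t.subst θ = s),
          (fun t => (t, (0:ℕ))) x = (fun t => (t, (0:ℕ))) y → x = y :=
        fun x _ y _ h => congrArg Prod.fst h
      have hrest_elt : ∀ e ∈ (lss C).filter (fun e => ¬ e.1.subst θ = s),
          nmElt R₂ θ e = nmElt R₁ θ e ∧ ∀ p ∈ nmElt R₁ θ e, O.gt s p.1 := by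
        rintro ⟨t, m⟩ hmem
        obtain ⟨hmem, hne⟩ := Finset.mem_filter.1 hmem
        obtain ⟨hgr, hle⟩ := helt C hCg hCmax t (hlss4 C t m hmem)
        have hKt : K (t.subst θ) := ⟨hgr, hle.resolve_left hne⟩
        obtain ⟨heq, hbd⟩ := hc.nmElt_eq θ t m hKt
        refine ⟨heq, fun p hp => ?_⟩
        rcases hbd p hp with heq2 | hgt2
        · rw [← heq2]; exact hKt.2
        · exact O.trans hKt.2 hgt2
      have hrest_lts : ∀ e ∈ (lts C).filter (fun e => ¬ e.1.subst θ = s),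
          nf R₂ (e.1.subst θ) = nf R₁ (e.1.subst θ) ∧ O.gt s (nf R₁ (e.1.subst θ)) := by
        rintro ⟨t, m⟩ hmem
        obtain ⟨hmem, hne⟩ := Finset.mem_filter.1 hmem
        obtain ⟨hgr, hle⟩ := helt C hCg hCmax t (hlts4 C t m hmem)
        have hKt : K (t.subst θ) := ⟨hgr, hle.resolve_left hne⟩
        refine ⟨hc.nf_eq _ hKt, ?_⟩
        rcases nf_ge O hgt₁ (t.subst θ) with heq2 | hgt2
        · rw [← heq2]; exact hKt.2
        · exact O.trans hKt.2 hgt2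
      refine ⟨((lss C).filter (fun e => ¬ e.1.subst θ = s)).sum (nmElt R₁ θ) +
        ((lts C).filter (fun e => ¬ e.1.subst θ = s)).sum
          (fun p => {(nf R₁ (p.1.subst θ), p.2)}), ?_, ?_, ?_⟩
      · intro p hp
        rcases Multiset.mem_add.1 hp with hp | hp
        · obtain ⟨e, he, hpe⟩ := Multiset.mem_sum.1 hp
          exact (hrest_elt e he).2 p hpe
        · obtain ⟨e, he, hpe⟩ := Multiset.mem_sum.1 hp
          have hp' : p = (nf R₁ (e.1.subst θ), e.2) := by simpa using hpe
          rw [hp']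
          exact (hrest_lts e he).2
      · have hsumlss1 : ((lss C).filter (fun e => e.1.subst θ = s)).sum (nmElt R₁ θ) = 0 := by
          rw [hlssf, Finset.sum_image hinj]
          apply Finset.sum_eq_zero
          intro t ht
          exact (hsElt t ht).1
        have hsumlts1 : ((lts C).filter (fun e => e.1.subst θ = s)).sum
            (fun p => ({(nf R₁ (p.1.subst θ), p.2)} : Multiset (Trm F V × ℕ))) =
            ((tsP C).filter fun t => t.subst θ = s).card •
              ({((s : Trm F V), (0:ℕ))} : Multiset (Trm F V × ℕ)) := by
          rw [hltsf, Finset.sum_image hinj]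
          refine (Finset.sum_congr rfl
            (g := fun _ => ({((s : Trm F V), (0:ℕ))} : Multiset (Trm F V × ℕ))) ?_).trans
            (Finset.sum_const _)
          intro t ht
          show ({(nf R₁ (t.subst θ), (0:ℕ))} : Multiset (Trm F V × ℕ)) = _
          rw [(hsElt t ht).2.2.1]
        unfold nm
        rw [← Finset.sum_filter_add_sum_filter_not (lss C) (fun e => e.1.subst θ = s)
            (nmElt R₁ θ),
          ← Finset.sum_filter_add_sum_filter_not (lts C) (fun e => e.1.subst θ = s)
            (fun p => {(nf R₁ (p.1.subst θ), p.2)})]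
        rw [hsumlss1, hsumlts1]
        abel
      · have hsumlss2 : ((lss C).filter (fun e => e.1.subst θ = s)).sum (nmElt R₂ θ) =
            ((tsP C).filter fun t => t.subst θ = s).card •
              (((s : Trm F V), (0:ℕ)) ::ₘ S₀) := by
          rw [hlssf, Finset.sum_image hinj]
          refine (Finset.sum_congr rfl
            (g := fun _ => (((s : Trm F V), (0:ℕ)) ::ₘ S₀)) ?_).trans
            (Finset.sum_const _)
          intro t ht
          exact (hsElt t ht).2.1
        have hsumlts2 : ((lts C).filter (fun e => e.1.subst θ = s)).sum
            (fun p => ({(nf R₂ (p.1.subst θ), p.2)} : Multiset (Trm F V × ℕ))) =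
            ((tsP C).filter fun t => t.subst θ = s).card •
              ({((nf R₂ s : Trm F V), (0:ℕ))} : Multiset (Trm F V × ℕ)) := by
          rw [hltsf, Finset.sum_image hinj]
          refine (Finset.sum_congr rfl
            (g := fun _ => ({((nf R₂ s : Trm F V), (0:ℕ))} : Multiset (Trm F V × ℕ))) ?_).trans
            (Finset.sum_const _)
          intro t ht
          show ({(nf R₂ (t.subst θ), (0:ℕ))} : Multiset (Trm F V × ℕ)) = _
          rw [(hsElt t ht).2.2.2]
        have hrest_lss_eq : ((lss C).filter (fun e => ¬ e.1.subst θ = s)).sum (nmElt R₂ θ) =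
            ((lss C).filter (fun e => ¬ e.1.subst θ = s)).sum (nmElt R₁ θ) :=
          Finset.sum_congr rfl (fun e he => (hrest_elt e he).1)
        have hrest_lts_eq : ((lts C).filter (fun e => ¬ e.1.subst θ = s)).sum
            (fun p => ({(nf R₂ (p.1.subst θ), p.2)} : Multiset (Trm F V × ℕ))) =
            ((lts C).filter (fun e => ¬ e.1.subst θ = s)).sum
            (fun p => ({(nf R₁ (p.1.subst θ), p.2)} : Multiset (Trm F V × ℕ))) :=
          Finset.sum_congr rfl (fun e he => by rw [(hrest_lts e he).1])
        unfold nm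
        rw [← Finset.sum_filter_add_sum_filter_not (lss C) (fun e => e.1.subst θ = s)
            (nmElt R₂ θ),
          ← Finset.sum_filter_add_sum_filter_not (lts C) (fun e => e.1.subst θ = s)
            (fun p => {(nf R₂ (p.1.subst θ), p.2)})]
        rw [hsumlss2, hsumlts2, hrest_lss_eq, hrest_lts_eq]
        have hcons : (((s : Trm F V), (0:ℕ)) ::ₘ S₀) = S₀ + {((s : Trm F V), (0:ℕ))} := by
          rw [← Multiset.singleton_add, add_comm]
        rw [hcons, smul_add, smul_add]
        abel
    obtain ⟨A₁, hA₁b, hA₁1, hA₁2⟩ := decomp C₁ hCg1 hmax1 hsN1 hsP1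
    obtain ⟨A₂, hA₂b, hA₂1, hA₂2⟩ := decomp C₂ hCg2 hmax2 hsN2 hsP2
    have hDb : ∀ p ∈ S₀ + ({((nf R₂ s : Trm F V), (0:ℕ))} : Multiset (Trm F V × ℕ)),
        lexGT O ((s : Trm F V), (0:ℕ)) p := by
      intro p hp
      rcases Multiset.mem_add.1 hp with hp | hp
      · exact Or.inl (hS₀b p hp)
      · have hp' : p = (nf R₂ s, 0) := by simpa using hp
        rw [hp']
        exact Or.inl hKt₀.2
    rw [cloGT_shape' O T R₁, cloGT_shape' O T R₂, hA₁1, hA₂1, hA₁2, hA₂2]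
    exact cmp_lemma (lexGT_trans O) (lexGT_irrefl O) ((s : Trm F V), (0:ℕ))
      A₁ A₂ (S₀ + {((nf R₂ s : Trm F V), (0:ℕ))}) _ _
      (fun p hp => Or.inl (hA₁b p hp)) (fun p hp => Or.inl (hA₂b p hp)) hDb _
  · -- Case 1 : E s = ∅
    set K : Trm F V → Prop := fun w => w.IsGround ∧ (w = s ∨ O.gt s w) with hKdef
    have hc : ConeHyps O R₁ R₂ K := by
      refine ⟨hsub, hOK₂, fun w hw => hw.1, ?_, ?_, ?_⟩
      · rintro p hp w hw rfl
        rcases hw.2 with heq | hgt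
        · exfalso
          obtain ⟨t, ht⟩ := hp
          have hts : t = s := by rw [← (memE ht).1, heq]
          rw [hts, hEs] at ht
          exact Set.notMem_empty _ ht
        · exact hmemR1 p hp hgt
      · rintro w w' ⟨hwg, hww⟩ hw'g hgt
        refine ⟨hw'g, Or.inr ?_⟩
        rcases hww with rfl | h
        · exact hgt
        · exact O.trans h hgt
      · rintro f l x r ⟨hg, hle⟩
        have hx : x.IsGround := Trm.isGround_app_iff.1 hg x (by simp)
        have hgt := gt_app_arg O f l r x hg
        refine ⟨hx, Or.inr ?_⟩
        rcases hle with rfl | h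
        · exact hgt
        · exact O.trans h hgt
    have hnm : ∀ (C : Clause F V), Clause.IsGround (Clause.subst θ C) →
        (∀ w ∈ allSub (Clause.subst θ C), w = s ∨ O.gt s w) →
        nm R₂ C θ = nm R₁ C θ := by
      intro C hCg hCmax
      unfold nm
      congr 1
      · refine Finset.sum_congr rfl ?_
        rintro ⟨t, m⟩ he
        have hK : K (t.subst θ) := helt C hCg hCmax t (hlss4 C t m he)
        exact (hc.nmElt_eq θ t m hK).1
      · refine Finset.sum_congr rfl ?_
        rintro ⟨t, m⟩ he
        have hK : K (t.subst θ) := helt C hCg hCmax t (hlts4 C t m he)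
        rw [hc.nf_eq _ hK]
    have e1 : nm R₂ C₁ θ = nm R₁ C₁ θ := hnm C₁ hCg1 hmax1
    have e2 : nm R₂ C₂ θ = nm R₁ C₂ θ := hnm C₂ hCg2 hmax2
    rw [cloGT_shape' O T R₁, cloGT_shape' O T R₂, e1, e2]
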